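/- arXiv:2602.03289 — 6 statements merged into one kernel-verified Lean document; each statement's English description precedes it below -/
import Mathlib

section
/- Let d ∈ F[x] be irreducible with deg_{x₁}(d) > 0, j ≥ 1, and let f = Σ_θ a_θ/θ(d)^j be a finite sum over elements θ ∈ G, with a_θ ∈ F(x̂₁)[x₁] and deg_{x₁}(a_θ) < deg_{x₁}(d). Let c = (c₁,…,cₙ) with each c_i ∈ F nonzero. Then there exist g₁,…,gₙ ∈ F(x) such that f = Σ_{i=1}^n (c_i·θ_{x_i}(g_i) − g_i) + a/d^j, where a = Σ_θ c^{−α_θ}·θ^{−1}(a_θ) and α_θ ∈ ℤⁿ is the exponent vector with θ = θ_x^{α_θ}; moreover deg_{x₁}(a) < deg_{x₁}(d), and consequently f is (c₁θ_{x₁},…,cₙθ_{xₙ})-summable if and only if a/d^j is (c₁θ_{x₁},…,cₙθ_{xₙ})-summable. -/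
noncomputable section

/-- The field of rational functions `F(x₁,…,xₙ)`, modeled as the fraction field of the
multivariate polynomial ring. -/
abbrev MvRat (F : Type*) [Field F] (n : ℕ) := FractionRing (MvPolynomial (Fin n) F)

/-- The image of the variable `xᵢ` in `F(x₁,…,xₙ)`. -/
def xv {F : Type*} [Field F] {n : ℕ} (i : Fin n) : MvRat F n :=
  algebraMap (MvPolynomial (Fin n) F) (MvRat F n) (MvPolynomial.X i)

/-- The subfield `F(x₂,…,xₙ)` of `F(x₁,…,xₙ)` (the variable `x₁` has index `0`). -/
def hatField (F : Type*) [Field F] (n : ℕ) [NeZero n] : Subfield (MvRat F n) :=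
  Subfield.closure (Set.range (algebraMap F (MvRat F n)) ∪ (xv '' {i : Fin n | i ≠ 0}))

/-- `a` is a polynomial in `x1` over the subfield `E` of degree `< D`. -/
def IsPolyDeg {L : Type*} [Field L] (E : Subfield L) (x1 : L) (D : ℕ) (a : L) : Prop :=
  ∃ cf : Fin D → E, a = ∑ k : Fin D, (cf k : L) * x1 ^ (k : ℕ)

/-- `a` is a polynomial in `x1` over the subfield `E`, i.e. `a ∈ E[x1]`. -/
def IsPolyE {L : Type*} [Field L] (E : Subfield L) (x1 a : L) : Prop :=
  ∃ D : ℕ, IsPolyDeg E x1 D a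

/-- `a` is a Laurent polynomial in `x1` over the subfield `E`, i.e. `a ∈ E[x1, x1⁻¹]`. -/
def IsLaurent {L : Type*} [Field L] (E : Subfield L) (x1 a : L) : Prop :=
  ∃ (s : Finset ℤ) (cf : ℤ → L), (∀ k ∈ s, cf k ∈ E) ∧ a = ∑ k ∈ s, cf k * x1 ^ k

/-- For a family `θ` of `F`-automorphisms and an exponent vector `α`,
the product `∏ i, θᵢ^(αᵢ)` (the element `θ_x^α` of the group generated by the `θᵢ`). -/
def thetaPowS {F L : Type*} [CommSemiring F] [Semiring L] [Algebra F L] {ι : Type*} [Fintype ι]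
    (θ : ι → (L ≃ₐ[F] L)) (α : ι → ℤ) : L ≃ₐ[F] L :=
  (Finset.univ.toList.map fun i => θ i ^ α i).prod

/-- Membership in the space `V_{[d]_G,j}`: `f` is a finite sum of fractions `a_g / g(d)^j`
with `g` in the group `G` and `a_g ∈ E[x₁]` of degree `< D` (`= deg_{x₁} d`). -/
def MemV {F L : Type*} [Field F] [Field L] [Algebra F L] (G : Set (L ≃ₐ[F] L))
    (E : Subfield L) (x1 : L) (dd : L) (D j : ℕ) (f : L) : Prop :=
  ∃ s : Finset (L ≃ₐ[F] L), ↑s ⊆ G ∧ ∃ a : (L ≃ₐ[F] L) → L,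
    (∀ g ∈ s, IsPolyDeg E x1 D (a g)) ∧ f = ∑ g ∈ s, a g / (g dd) ^ j

/-- `p` and `p'` are `G`-equivalent: `p = c · g(p')` for some nonzero `c ∈ F` and `g ∈ G`. -/
def GEquivSet {F L : Type*} [Field F] [Field L] [Algebra F L] (G : Set (L ≃ₐ[F] L))
    (p p' : L) : Prop :=
  ∃ c : F, c ≠ 0 ∧ ∃ g ∈ G, p = algebraMap F L c * g p'

/-- `w` divides `p` inside the ring `E[x1]`. -/
def DvdE {L : Type*} [Field L] (E : Subfield L) (x1 w p : L) : Prop :=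
  ∃ u : L, IsPolyE E x1 u ∧ p = w * u

/-- `p ∈ E[x₁]` is normal w.r.t. `θ1`: `gcd(p, θ1^ℓ(p)) = 1` for all nonzero `ℓ ∈ ℤ`,
i.e. every common divisor (in `E[x₁]`) of `p` and `θ1^ℓ(p)` is a unit (lies in `E`). -/
def NormalWrt {F L : Type*} [Field F] [Field L] [Algebra F L] (E : Subfield L) (x1 : L)
    (θ1 : L ≃ₐ[F] L) (p : L) : Prop :=
  ∀ ℓ : ℤ, ℓ ≠ 0 → ∀ w : L, IsPolyE E x1 w →
    DvdE E x1 w p → DvdE E x1 w ((θ1 ^ ℓ) p) → w ∈ E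

/-- The isotropy group of `p` (in exponent-vector coordinates): the subgroup of `ℤ^ι`
of all `α` with `Θ(α)(p) = c·p` for some nonzero `c ∈ F`. -/
def isotropyZ {F L : Type*} [Field F] [Field L] [Algebra F L] {ι : Type*}
    (Θ : (ι → ℤ) → (L ≃ₐ[F] L))
    (hadd : ∀ α β, Θ (α + β) = Θ α * Θ β) (h0 : Θ 0 = 1) (p : L) :
    AddSubgroup (ι → ℤ) where
  carrier := {α | ∃ c : F, c ≠ 0 ∧ Θ α p = algebraMap F L c * p}
  zero_mem' := ⟨1, one_ne_zero, by simp [h0]⟩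
  add_mem' := by
    rintro α β ⟨c, hc, hcp⟩ ⟨e, he, hep⟩
    refine ⟨e * c, mul_ne_zero he hc, ?_⟩
    rw [hadd, AlgEquiv.mul_apply, hep, map_mul, AlgEquiv.commutes, hcp, map_mul]
    ring
  neg_mem' := by
    rintro α ⟨c, hc, hcp⟩
    refine ⟨c⁻¹, inv_ne_zero hc, ?_⟩
    have h1 : Θ (-α) (Θ α p) = p := by
      rw [← AlgEquiv.mul_apply, ← hadd, neg_add_cancel, h0, AlgEquiv.one_apply]
    rw [hcp, map_mul, AlgEquiv.commutes] at h1
    have hc0 : (algebraMap F L) c ≠ 0 :=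
      (map_ne_zero_iff _ (algebraMap F L).injective).mpr hc
    rw [map_inv₀, eq_inv_mul_iff_mul_eq₀ hc0]
    exact h1

end

/-!
Writing `φ_α = θ_x^α` and `h_α = c^{-α} φ_α⁻¹(a_α) / d^j`, each summand of `f` is
`a_α / φ_α(d)^j = c^α φ_α(h_α)`, so `f - a / d^j = Σ_α (c^α φ_α(h_α) - h_α)`. The pairs `(e, φ)`
for which `h ↦ e φ(h) - h` takes values in the summable elements form a group, and it contains the
generators `(cᵢ, θ_{xᵢ})`, so each difference is summable. For the degree bound, every `φ_α⁻¹` acts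
on each variable by an affine map over `F`; hence it preserves `F(x̂₁)` and sends `x₁` to
`b x₁ + e` with `b, e ∈ F`, which does not raise the degree in `x₁`.
-/

section Summability

variable {F L ι : Type*} [CommRing F] [Ring L] [Algebra F L] [Fintype ι]

def twistedDiff (c : ι → F) (θ : ι → L ≃ₐ[F] L) : (ι → L) →+ L where
  toFun g := ∑ i, (algebraMap F L (c i) * θ i (g i) - g i)
  map_zero' := by simp
  map_add' g g' := by
    simp only [Pi.add_apply, map_add, mul_add, ← Finset.sum_add_distrib]
    exact Finset.sum_congr rfl fun i _ => by abel

def summableSubgroup (c : ι → F) (θ : ι → L ≃ₐ[F] L) : AddSubgroup L :=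
  (twistedDiff c θ).range

variable {c : ι → F} {θ : ι → L ≃ₐ[F] L}

lemma mem_summableSubgroup_iff {f : L} :
    f ∈ summableSubgroup c θ ↔ ∃ g : ι → L, f = ∑ i, (algebraMap F L (c i) * θ i (g i) - g i) :=
  exists_congr fun _ => eq_comm

lemma algebraMap_mul_apply_sub_mem_summableSubgroup (i : ι) (h : L) :
    algebraMap F L (c i) * θ i h - h ∈ summableSubgroup c θ := by
  classical
  refine ⟨Pi.single i h, ?_⟩
  rw [twistedDiff, AddMonoidHom.coe_mk, ZeroHom.coe_mk, Fintype.sum_eq_single i fun l hl => ?_]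
  · simp
  · simp [hl]

/-- The pairs `(e, φ)` for which `e • φ` acts trivially on `L ⧸ R`. -/
def twistTrivialMod (R : AddSubgroup L) : Subgroup (Fˣ × (L ≃ₐ[F] L)) where
  carrier := {p | ∀ h, algebraMap F L p.1 * p.2 h - h ∈ R}
  one_mem' h := by simp
  mul_mem' {p p'} hp hp' h := by
    convert add_mem (hp (algebraMap F L p'.1 * p'.2 h)) (hp' h) using 1
    simp only [Prod.fst_mul, Prod.snd_mul, Units.val_mul, map_mul, AlgEquiv.mul_apply,
      AlgEquiv.commutes, mul_assoc]
    abel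
  inv_mem' {p} hp h := by
    have hcancel : algebraMap F L p.1 * p.2 (algebraMap F L ↑p.1⁻¹ * p.2.symm h) = h := by
      rw [map_mul, AlgEquiv.commutes, AlgEquiv.apply_symm_apply, ← mul_assoc, ← map_mul,
        Units.mul_inv, map_one, one_mul]
    have hmem := neg_mem (hp (algebraMap F L ↑p.1⁻¹ * p.2.symm h))
    rwa [hcancel, neg_sub] at hmem

lemma mk_mem_twistTrivialMod_summableSubgroup (i : ι) {e : Fˣ} (he : (e : F) = c i) :
    (e, θ i) ∈ twistTrivialMod (summableSubgroup c θ) := fun h => by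
  rw [he]
  exact algebraMap_mul_apply_sub_mem_summableSubgroup i h

end Summability

section Twisted

variable {F L : Type*} [CommRing F] [DivisionRing L] [Algebra F L]

lemma div_apply_pow_sub_mem {R : AddSubgroup L} {e : Fˣ} {φ : L ≃ₐ[F] L}
    (he : (e, φ) ∈ twistTrivialMod R) (a b : L) (j : ℕ) :
    a / φ b ^ j - algebraMap F L ↑e⁻¹ * φ.symm a / b ^ j ∈ R := by
  convert he (algebraMap F L ↑e⁻¹ * φ.symm a / b ^ j) using 2
  rw [map_div₀, map_mul, AlgEquiv.commutes, AlgEquiv.apply_symm_apply, map_pow, ← mul_div_assoc,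
    ← mul_assoc, ← map_mul, Units.mul_inv, map_one, one_mul]

end Twisted

section ThetaPow

variable {F L ι : Type*} [CommRing F] [Ring L] [Algebra F L] [Fintype ι]

lemma thetaPowS_mem {K : Subgroup (L ≃ₐ[F] L)} {θ : ι → L ≃ₐ[F] L} (hθ : ∀ i, θ i ∈ K)
    (α : ι → ℤ) : thetaPowS θ α ∈ K := by
  unfold thetaPowS
  refine Subgroup.list_prod_mem _ fun _ hφ => ?_
  obtain ⟨i, -, rfl⟩ := List.mem_map.mp hφ
  exact zpow_mem (hθ i) (α i)

lemma prod_zpow_thetaPowS_mem {K : Subgroup (Fˣ × (L ≃ₐ[F] L))} {u : ι → Fˣ}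
    {θ : ι → L ≃ₐ[F] L} (h : ∀ i, (u i, θ i) ∈ K) (α : ι → ℤ) :
    (∏ i, u i ^ α i, thetaPowS θ α) ∈ K := by
  have hlist : (∏ i, u i ^ α i, thetaPowS θ α) =
      (Finset.univ.toList.map fun i => (u i, θ i) ^ α i).prod := by
    refine Prod.ext ?_ ?_
    · rw [← Finset.prod_map_toList, ← MonoidHom.coe_fst, map_list_prod, List.map_map]
      rfl
    · rw [thetaPowS, ← MonoidHom.coe_snd, map_list_prod, List.map_map]
      rfl
  rw [hlist]
  refine Subgroup.list_prod_mem _ fun _ hp => ?_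
  obtain ⟨i, -, rfl⟩ := List.mem_map.mp hp
  exact zpow_mem (h i) (α i)

end ThetaPow

section Affine

variable {F L : Type*} [CommRing F] [Ring L] [Algebra F L]

def affineStabilizer (x : L) : Subgroup (L ≃ₐ[F] L) where
  carrier := {ψ | ∃ (b : Fˣ) (e : F), ψ x = algebraMap F L b * x + algebraMap F L e}
  one_mem' := ⟨1, 0, by simp⟩
  mul_mem' := by
    rintro ψ φ ⟨b, e, hψ⟩ ⟨b', e', hφ⟩
    refine ⟨b' * b, b' * e + e', ?_⟩
    rw [AlgEquiv.mul_apply, hφ, map_add, map_mul, hψ, AlgEquiv.commutes, AlgEquiv.commutes]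
    simp only [Units.val_mul, map_mul, map_add]
    noncomm_ring
  inv_mem' := by
    rintro ψ ⟨b, e, hψ⟩
    refine ⟨b⁻¹, -(↑b⁻¹ * e), ψ.injective ?_⟩
    rw [AlgEquiv.aut_inv, AlgEquiv.apply_symm_apply, map_add, map_mul, hψ, AlgEquiv.commutes,
      AlgEquiv.commutes, map_neg, map_mul, mul_add, ← mul_assoc, ← map_mul, Units.inv_mul,
      map_one, one_mul]
    abel

end Affine

section PolyDeg

variable {L : Type*} [Field L] {E : Subfield L} {x : L} {D : ℕ}

lemma isPolyDeg_iff_mem_span {a : L} :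
    IsPolyDeg E x D a ↔ a ∈ Submodule.span E (Set.range fun k : Fin D => x ^ (k : ℕ)) := by
  simp only [Submodule.mem_span_range_iff_exists_fun, IsPolyDeg, Subfield.smul_def, smul_eq_mul,
    eq_comm]

lemma IsPolyDeg.map_of_affine {G : Type*} [FunLike G L L] [RingHomClass G L L] {ψ : G}
    (hψ : ∀ e ∈ E, ψ e ∈ E) {b e : L} (hb : b ∈ E) (he : e ∈ E) (hx : ψ x = b * x + e)
    {a : L} (ha : IsPolyDeg E x D a) :
    IsPolyDeg E x D (ψ a) := by
  rw [isPolyDeg_iff_mem_span] at ha ⊢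
  induction ha using Submodule.span_induction with
  | mem _ hy =>
    obtain ⟨k, rfl⟩ := hy
    rw [map_pow, hx, add_pow]
    refine Submodule.sum_mem _ fun m hm => ?_
    have hmD : m < D := by have := Finset.mem_range.mp hm; lia
    have hterm : (b * x) ^ m * e ^ ((k : ℕ) - m) * ((k : ℕ).choose m : L) =
        (⟨b ^ m * e ^ ((k : ℕ) - m) * ((k : ℕ).choose m : L),
          mul_mem (mul_mem (pow_mem hb m) (pow_mem he _)) (natCast_mem E _)⟩ : E) • x ^ m := by
      rw [Subfield.smul_def, smul_eq_mul, mul_pow]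
      ring
    rw [hterm]
    exact Submodule.smul_mem _ _ (Submodule.subset_span ⟨⟨m, hmD⟩, rfl⟩)
  | zero => simp
  | add _ _ _ _ h₁ h₂ => simpa using add_mem h₁ h₂
  | smul r _ _ h =>
    rw [Subfield.smul_def, smul_eq_mul, map_mul]
    exact Submodule.smul_mem _ ⟨ψ r, hψ r r.2⟩ h

end PolyDeg

section HatField

variable {F : Type*} [Field F] {n : ℕ} [NeZero n]

lemma algebraMap_mem_hatField (r : F) : algebraMap F (MvRat F n) r ∈ hatField F n :=
  Subfield.subset_closure (Set.mem_union_left _ ⟨r, rfl⟩)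

lemma xv_mem_hatField {l : Fin n} (hl : l ≠ 0) : xv l ∈ hatField F n :=
  Subfield.subset_closure (Set.mem_union_right _ ⟨l, hl, rfl⟩)

lemma apply_mem_hatField {ψ : MvRat F n ≃ₐ[F] MvRat F n}
    (hψ : ψ ∈ ⨅ l, affineStabilizer (xv l)) {e : MvRat F n} (he : e ∈ hatField F n) :
    ψ e ∈ hatField F n := by
  suffices hatField F n ≤ (hatField F n).comap (ψ : MvRat F n →+* MvRat F n) from this he
  refine Subfield.closure_le.mpr ?_
  rintro _ (⟨r, rfl⟩ | ⟨l, hl, rfl⟩)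
  · rw [SetLike.mem_coe, Subfield.mem_comap, RingHom.coe_coe, AlgEquiv.commutes]
    exact algebraMap_mem_hatField r
  · obtain ⟨b, e, hbe⟩ := Subgroup.mem_iInf.mp hψ l
    rw [SetLike.mem_coe, Subfield.mem_comap, RingHom.coe_coe, hbe]
    exact add_mem (mul_mem (algebraMap_mem_hatField _) (xv_mem_hatField hl))
      (algebraMap_mem_hatField e)

lemma IsPolyDeg.apply_of_mem_affineStabilizer {ψ : MvRat F n ≃ₐ[F] MvRat F n}
    (hψ : ψ ∈ ⨅ l, affineStabilizer (xv l)) {D : ℕ} {a : MvRat F n}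
    (ha : IsPolyDeg (hatField F n) (xv 0) D a) : IsPolyDeg (hatField F n) (xv 0) D (ψ a) := by
  obtain ⟨b, e, hbe⟩ := Subgroup.mem_iInf.mp hψ 0
  exact ha.map_of_affine (fun _ => apply_mem_hatField hψ)
    (algebraMap_mem_hatField _) (algebraMap_mem_hatField e) hbe

end HatField

theorem stmt_2_general {F : Type*} [Field F] {n : ℕ} [NeZero n]
    (q : F) (hq0 : q ≠ 0)
    (θ : Fin n → (MvRat F n ≃ₐ[F] MvRat F n))
    (hθfix : ∀ i l : Fin n, i ≠ l → θ i (xv l) = xv l)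
    (hθ : ∀ i : Fin n,
      θ i (xv i) = xv i + 1 ∨ θ i (xv i) = algebraMap F (MvRat F n) q * xv i)
    (d : MvPolynomial (Fin n) F)
    (j : ℕ)
    (s : Finset (Fin n → ℤ)) (aθ : (Fin n → ℤ) → MvRat F n)
    (haθ : ∀ α ∈ s, IsPolyDeg (hatField F n) (xv 0) (d.degreeOf 0) (aθ α))
    (f : MvRat F n)
    (hf : f = ∑ α ∈ s, aθ α /
      (thetaPowS θ α (algebraMap (MvPolynomial (Fin n) F) (MvRat F n) d)) ^ j)
    (c : Fin n → F) (hc : ∀ i, c i ≠ 0) :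
    (∃ g : Fin n → MvRat F n,
        f = (∑ i : Fin n, (algebraMap F (MvRat F n) (c i) * θ i (g i) - g i)) +
          (∑ α ∈ s, algebraMap F (MvRat F n) (∏ l : Fin n, c l ^ (-(α l))) *
              (thetaPowS θ α).symm (aθ α)) /
            (algebraMap (MvPolynomial (Fin n) F) (MvRat F n) d) ^ j) ∧
    IsPolyDeg (hatField F n) (xv 0) (d.degreeOf 0)
      (∑ α ∈ s, algebraMap F (MvRat F n) (∏ l : Fin n, c l ^ (-(α l))) *
        (thetaPowS θ α).symm (aθ α)) ∧
    ((∃ g : Fin n → MvRat F n,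
        f = ∑ i : Fin n, (algebraMap F (MvRat F n) (c i) * θ i (g i) - g i)) ↔
      (∃ g : Fin n → MvRat F n,
        (∑ α ∈ s, algebraMap F (MvRat F n) (∏ l : Fin n, c l ^ (-(α l))) *
            (thetaPowS θ α).symm (aθ α)) /
          (algebraMap (MvPolynomial (Fin n) F) (MvRat F n) d) ^ j =
          ∑ i : Fin n, (algebraMap F (MvRat F n) (c i) * θ i (g i) - g i))) := by
  set dd := algebraMap (MvPolynomial (Fin n) F) (MvRat F n) d
  set a := ∑ α ∈ s, algebraMap F (MvRat F n) (∏ l : Fin n, c l ^ (-(α l))) *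
    (thetaPowS θ α).symm (aθ α)
  have hθaff : ∀ i, θ i ∈ ⨅ l, affineStabilizer (xv l) := fun i =>
    Subgroup.mem_iInf.mpr fun l => by
      obtain rfl | hil := eq_or_ne i l
      · rcases hθ i with h | h
        · exact ⟨1, 1, by simp [h]⟩
        · exact ⟨Units.mk0 q hq0, 0, by simp [h]⟩
      · exact ⟨1, 0, by simp [hθfix i l hil]⟩
  have hdiff : f - a / dd ^ j ∈ summableSubgroup c θ := by
    rw [hf, Finset.sum_div, ← Finset.sum_sub_distrib]
    refine sum_mem fun α _ => ?_
    let u : Fin n → Fˣ := fun i => Units.mk0 (c i) (hc i)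
    have hcoef : (((∏ l, u l ^ α l)⁻¹ : Fˣ) : F) = ∏ l, c l ^ (-(α l)) := by
      simp [u, Finset.prod_inv_distrib]
    have hpair : (∏ l, u l ^ α l, thetaPowS θ α) ∈ twistTrivialMod (summableSubgroup c θ) :=
      prod_zpow_thetaPowS_mem
        (fun i => mk_mem_twistTrivialMod_summableSubgroup i (Units.val_mk0 (hc i))) α
    rw [← hcoef]
    exact div_apply_pow_sub_mem hpair (aθ α) dd j
  refine ⟨?_, ?_, ?_⟩
  · obtain ⟨g, hg⟩ := mem_summableSubgroup_iff.mp hdiff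
    exact ⟨g, by rw [← hg, sub_add_cancel]⟩
  · rw [isPolyDeg_iff_mem_span]
    refine Submodule.sum_mem _ fun α hα => ?_
    have hsymm := (haθ α hα).apply_of_mem_affineStabilizer (inv_mem (thetaPowS_mem hθaff α))
    rw [isPolyDeg_iff_mem_span] at hsymm
    exact Submodule.smul_mem _ ⟨_, algebraMap_mem_hatField _⟩ hsymm
  · rw [← mem_summableSubgroup_iff, ← mem_summableSubgroup_iff]
    exact ⟨fun hfR => by simpa using sub_mem hfR hdiff,
      fun haR => by simpa using add_mem hdiff haR⟩

set_option maxHeartbeats 1000000 in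
/-- **Lemma: reduction of an orbit component to a simple fraction.** Let
`d ∈ F[x]` be irreducible with `deg_{x₁} d > 0`, `j ≥ 1`, and
`f = Σ_{α ∈ s} a_α / θ_x^α(d)^j` with `a_α ∈ F(x̂₁)[x₁]` of degree `< deg_{x₁} d`.
Let `c₁,…,cₙ ∈ F` be nonzero. Then there exist `g₁,…,gₙ ∈ F(x)` with
`f = Σᵢ (cᵢθ_{xᵢ}(gᵢ) − gᵢ) + a/d^j` where `a = Σ_α c^{−α}·(θ_x^α)⁻¹(a_α)`; moreover
`deg_{x₁} a < deg_{x₁} d`, and `f` is `(c₁θ_{x₁},…,cₙθ_{xₙ})`-summable iff `a/d^j` is. -/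
theorem stmt_2 {F : Type*} [Field F] [CharZero F] {n : ℕ} [NeZero n]
    (q : F) (hq0 : q ≠ 0) (hq : ∀ m : ℤ, m ≠ 0 → q ^ m ≠ 1)
    (θ : Fin n → (MvRat F n ≃ₐ[F] MvRat F n))
    (hθfix : ∀ i l : Fin n, i ≠ l → θ i (xv l) = xv l)
    (hθ : ∀ i : Fin n,
      θ i (xv i) = xv i + 1 ∨ θ i (xv i) = algebraMap F (MvRat F n) q * xv i)
    (d : MvPolynomial (Fin n) F) (hd : Irreducible d) (hdeg : 0 < d.degreeOf 0)
    (j : ℕ) (hj : 1 ≤ j)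
    (s : Finset (Fin n → ℤ)) (aθ : (Fin n → ℤ) → MvRat F n)
    (haθ : ∀ α ∈ s, IsPolyDeg (hatField F n) (xv 0) (d.degreeOf 0) (aθ α))
    (f : MvRat F n)
    (hf : f = ∑ α ∈ s, aθ α /
      (thetaPowS θ α (algebraMap (MvPolynomial (Fin n) F) (MvRat F n) d)) ^ j)
    (c : Fin n → F) (hc : ∀ i, c i ≠ 0) :
    (∃ g : Fin n → MvRat F n,
        f = (∑ i : Fin n, (algebraMap F (MvRat F n) (c i) * θ i (g i) - g i)) +
          (∑ α ∈ s, algebraMap F (MvRat F n) (∏ l : Fin n, c l ^ (-(α l))) *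
              (thetaPowS θ α).symm (aθ α)) /
            (algebraMap (MvPolynomial (Fin n) F) (MvRat F n) d) ^ j) ∧
    IsPolyDeg (hatField F n) (xv 0) (d.degreeOf 0)
      (∑ α ∈ s, algebraMap F (MvRat F n) (∏ l : Fin n, c l ^ (-(α l))) *
        (thetaPowS θ α).symm (aθ α)) ∧
    ((∃ g : Fin n → MvRat F n,
        f = ∑ i : Fin n, (algebraMap F (MvRat F n) (c i) * θ i (g i) - g i)) ↔
      (∃ g : Fin n → MvRat F n,
        (∑ α ∈ s, algebraMap F (MvRat F n) (∏ l : Fin n, c l ^ (-(α l))) *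
            (thetaPowS θ α).symm (aθ α)) /
          (algebraMap (MvPolynomial (Fin n) F) (MvRat F n) d) ^ j =
          ∑ i : Fin n, (algebraMap F (MvRat F n) (c i) * θ i (g i) - g i))) :=
  stmt_2_general q hq0 θ hθfix hθ d j s aθ haθ f hf c hc
end

section
/- Let p ∈ F[x] be a nonconstant polynomial. Then the quotient group G^σ/G^σ_p of the free abelian group G^σ = ⟨σ_{y₁},…,σ_{y_k}⟩ by the isotropy group G^σ_p of p in G^σ is a free abelian group. -/
noncomputable section

/-- The field of rational functions `F(y₁,…,y_k,z₁,…,z_m)`. -/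
abbrev MvRatS (F : Type*) [Field F] (k m : ℕ) := FractionRing (MvPolynomial (Fin k ⊕ Fin m) F)

/-- The image of a variable in `F(y,z)`. -/
def xvS {F : Type*} [Field F] {k m : ℕ} (i : Fin k ⊕ Fin m) : MvRatS F k m :=
  algebraMap (MvPolynomial (Fin k ⊕ Fin m) F) (MvRatS F k m) (MvPolynomial.X i)

end


namespace Polynomial

variable {R : Type*} [CommRing R] [IsDomain R]

theorem eq_one_of_comp_X_add_C_eq_C_mul {f : R[X]} (hf : f ≠ 0) {b c : R}
    (h : f.comp (X + C b) = C c * f) : c = 1 := by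
  have hlc := congrArg leadingCoeff h
  rw [leadingCoeff_comp (by simp), (monic_X_add_C b).leadingCoeff, one_pow, mul_one,
    leadingCoeff_mul, leadingCoeff_C] at hlc
  exact (mul_eq_right₀ (leadingCoeff_ne_zero.mpr hf)).mp hlc.symm

theorem eq_C_eval_zero_of_comp_X_add_C_eq_self [CharZero R] {f : R[X]} {b : R} (hb : b ≠ 0)
    (h : f.comp (X + C b) = f) : f = C (f.eval 0) := by
  have hperiodic : ∀ j : ℕ, f.eval (j * b) = f.eval 0 := by
    intro j
    induction j with
    | zero => simp
    | succ j ih =>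
      have := congrArg (eval (j * b)) h
      rw [eval_comp] at this
      simpa [add_mul, ih] using this
  rw [← sub_eq_zero]
  refine eq_zero_of_infinite_isRoot _
    (Set.infinite_of_injective_forall_mem (f := fun j : ℕ => (j * b : R)) ?_ ?_)
  · intro i j hij
    exact Nat.cast_injective (mul_right_cancel₀ hb hij)
  · intro j
    simp [hperiodic]

end Polynomial

namespace MvPolynomial

variable {ι : Type*}

section CommSemiring

variable {R : Type*} [CommSemiring R]

noncomputable def translate (a : ι → R) : MvPolynomial ι R →ₐ[R] MvPolynomial ι R :=
  aeval fun i => X i + C (a i)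

theorem eval_translate (a v : ι → R) (p : MvPolynomial ι R) :
    eval v (translate a p) = eval (v + a) p := by
  change aeval v (aeval _ p) = aeval (v + a) p
  rw [comp_aeval_apply]
  congr 1
  ext i
  simp

theorem algEquiv_apply_algebraMap_eq_algebraMap_translate {K : Type*} [CommSemiring K]
    [Algebra R K] [Algebra (MvPolynomial ι R) K] [IsScalarTower R (MvPolynomial ι R) K]
    (g : K ≃ₐ[R] K) {a : ι → R}
    (h : ∀ i, g (algebraMap (MvPolynomial ι R) K (X i))
      = algebraMap (MvPolynomial ι R) K (X i) + algebraMap R K (a i))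
    (p : MvPolynomial ι R) : g (algebraMap _ K p) = algebraMap _ K (translate a p) := by
  have hcomp : g.toAlgHom.comp (IsScalarTower.toAlgHom R (MvPolynomial ι R) K)
      = (IsScalarTower.toAlgHom R (MvPolynomial ι R) K).comp (translate a) := by
    refine algHom_ext fun i => ?_
    rw [AlgHom.comp_apply, AlgHom.comp_apply, IsScalarTower.coe_toAlgHom', translate, aeval_X,
      map_add, ← algebraMap_eq, ← IsScalarTower.algebraMap_apply]
    exact h i
  exact DFunLike.congr_fun hcomp p

noncomputable def restrictToLine (v a : ι → R) : MvPolynomial ι R →ₐ[R] Polynomial R :=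
  aeval fun i => Polynomial.C (v i) + Polynomial.C (a i) * Polynomial.X

theorem eval_restrictToLine (v a : ι → R) (t : R) (p : MvPolynomial ι R) :
    (restrictToLine v a p).eval t = eval (v + t • a) p := by
  rw [← Polynomial.coe_aeval_eq_eval, restrictToLine, comp_aeval_apply]
  have hpoint :
      (fun i => Polynomial.aeval t (Polynomial.C (v i) + Polynomial.C (a i) * Polynomial.X))
        = v + t • a := by
    funext i
    simp only [map_add, map_mul, Polynomial.aeval_C, Polynomial.aeval_X, Pi.add_apply,
      Pi.smul_apply, smul_eq_mul, Algebra.algebraMap_self, RingHom.id_apply, mul_comm]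
  rw [hpoint]
  rfl

end CommSemiring

section Domain

variable {R : Type*} [CommRing R] [IsDomain R]

theorem restrictToLine_comp_X_add_C_one_of_translate_eq_C_mul [Infinite R] {a : ι → R} {c : R}
    {p : MvPolynomial ι R} (h : translate a p = C c * p) (v : ι → R) :
    (restrictToLine v a p).comp (Polynomial.X + Polynomial.C 1)
      = Polynomial.C c * restrictToLine v a p := by
  refine Polynomial.funext fun t => ?_
  have hpoint := congrArg (eval (v + t • a)) h
  rw [eval_translate, eval_mul, eval_C] at hpoint
  simp only [Polynomial.eval_comp, Polynomial.eval_add, Polynomial.eval_X, Polynomial.eval_C,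
    Polynomial.eval_mul, eval_restrictToLine, add_smul, one_smul, ← add_assoc, hpoint]

theorem eq_one_of_translate_eq_C_mul [Infinite R] {a : ι → R} {c : R} {p : MvPolynomial ι R}
    (hp : p ≠ 0) (h : translate a p = C c * p) : c = 1 := by
  obtain ⟨v, hv⟩ : ∃ v, eval v p ≠ 0 := by
    by_contra! hzero
    exact hp (funext fun v => by simp [hzero v])
  refine Polynomial.eq_one_of_comp_X_add_C_eq_C_mul (fun hline => hv ?_)
    (restrictToLine_comp_X_add_C_one_of_translate_eq_C_mul h v)
  simpa [eval_restrictToLine] using congrArg (Polynomial.eval 0) hline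

theorem translate_smul_eq_self [CharZero R] {a : ι → R} {p : MvPolynomial ι R}
    (h : translate a p = p) (t : R) : translate (t • a) p = p := by
  refine funext fun v => ?_
  have hperiodic : (restrictToLine v a p).comp (Polynomial.X + Polynomial.C 1)
      = restrictToLine v a p := by
    simpa using restrictToLine_comp_X_add_C_one_of_translate_eq_C_mul (c := 1) (by simpa) v
  have hline := Polynomial.eq_C_eval_zero_of_comp_X_add_C_eq_self one_ne_zero hperiodic
  have := congrArg (Polynomial.eval t) hline
  simpa [eval_restrictToLine, eval_translate] using this

end Domain

end MvPolynomial

namespace AlgEquiv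

variable {R A : Type*} [CommRing R] [Ring A] [Algebra R A]

theorem zpow_apply_of_apply_eq_add_algebraMap {g : A ≃ₐ[R] A} {x : A} {c : R}
    (h : g x = x + algebraMap R A c) (t : ℤ) : (g ^ t) x = x + algebraMap R A (t * c) := by
  induction t using Int.induction_on with
  | zero => simp
  | succ t ih =>
    rw [zpow_add_one, mul_apply, h, map_add, ih, commutes, add_assoc, ← map_add]
    congr 2
    push_cast
    ring
  | pred t ih =>
    apply g.injective
    rw [← mul_apply, mul_self_zpow, sub_add_cancel, ih, map_add, h, commutes, add_assoc,
      ← map_add]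
    congr 2
    push_cast
    ring

theorem list_prod_map_apply_of_apply_eq_add_algebraMap {ι : Type*} {θ : ι → A ≃ₐ[R] A}
    {x : A} {c : ι → R} (h : ∀ j, θ j x = x + algebraMap R A (c j)) (l : List ι) :
    (l.map θ).prod x = x + algebraMap R A (l.map c).sum := by
  induction l with
  | nil => simp
  | cons j l ih =>
    rw [List.map_cons, List.prod_cons, mul_apply, ih, map_add, h, commutes, List.map_cons,
      List.sum_cons, map_add]
    abel

end AlgEquiv

theorem thetaPowS_apply_of_apply_eq_add_algebraMap {R A ι : Type*} [CommRing R] [Ring A]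
    [Algebra R A] [Fintype ι] {θ : ι → A ≃ₐ[R] A} {x : A} {c : ι → R}
    (h : ∀ j, θ j x = x + algebraMap R A (c j)) (α : ι → ℤ) :
    thetaPowS θ α x = x + algebraMap R A (∑ j, α j * c j) := by
  rw [thetaPowS, AlgEquiv.list_prod_map_apply_of_apply_eq_add_algebraMap
    (fun j => AlgEquiv.zpow_apply_of_apply_eq_add_algebraMap (h j) (α j)), Finset.sum_map_toList]

theorem QuotientAddGroup.isAddTorsionFree_of_nsmul_mem {G : Type*} [AddCommGroup G]
    {H : AddSubgroup G} (hH : ∀ (n : ℕ) (x : G), n ≠ 0 → n • x ∈ H → x ∈ H) :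
    IsAddTorsionFree (G ⧸ H) := by
  refine .of_not_isOfFinAddOrder fun x hx hfin => hx ?_
  obtain ⟨x⟩ := x
  obtain ⟨n, hn, hnx⟩ := hfin.exists_nsmul_eq_zero
  exact (QuotientAddGroup.eq_zero_iff x).mpr
    (hH n x hn.ne' ((QuotientAddGroup.eq_zero_iff _).mp hnx))

theorem QuotientAddGroup.free_of_nsmul_mem {G : Type*} [AddCommGroup G] [Module.Finite ℤ G]
    {H : AddSubgroup G} (hH : ∀ (n : ℕ) (x : G), n ≠ 0 → n • x ∈ H → x ∈ H) :
    Module.Free ℤ (G ⧸ H) :=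
  have := isAddTorsionFree_of_nsmul_mem hH
  have := Module.Finite.of_surjective (QuotientAddGroup.mk' H).toIntLinearMap
    (QuotientAddGroup.mk'_surjective H)
  Module.free_of_finite_type_torsion_free'

section Shifts

variable {F : Type*} [Field F] {k m : ℕ}

def shiftVector (α : Fin k → ℤ) : Fin k ⊕ Fin m → F :=
  Sum.elim (fun j => (α j : F)) 0

theorem shiftVector_nsmul (n : ℕ) (α : Fin k → ℤ) :
    shiftVector (m := m) (n • α) = (n : F) • shiftVector (F := F) α := by
  funext i
  cases i <;> simp [shiftVector]

variable {σ : Fin k → (MvRatS F k m ≃ₐ[F] MvRatS F k m)}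

theorem thetaPowS_xvS (hσ : ∀ j, σ j (xvS (Sum.inl j)) = xvS (Sum.inl j) + 1)
    (hσfix : ∀ j i, i ≠ Sum.inl j → σ j (xvS i) = xvS i) (α : Fin k → ℤ) (i : Fin k ⊕ Fin m) :
    thetaPowS σ α (xvS i) = xvS i + algebraMap F (MvRatS F k m) (shiftVector α i) := by
  rw [thetaPowS_apply_of_apply_eq_add_algebraMap
    (c := fun j => if i = Sum.inl j then 1 else 0)]
  · congr 2
    cases i <;> simp [shiftVector]
  · intro j
    by_cases hij : i = Sum.inl j
    · simp [hij, hσ]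
    · simp [hij, hσfix j i hij]

theorem thetaPowS_algebraMap (hσ : ∀ j, σ j (xvS (Sum.inl j)) = xvS (Sum.inl j) + 1)
    (hσfix : ∀ j i, i ≠ Sum.inl j → σ j (xvS i) = xvS i) (α : Fin k → ℤ)
    (g : MvPolynomial (Fin k ⊕ Fin m) F) :
    thetaPowS σ α (algebraMap _ (MvRatS F k m) g)
      = algebraMap _ (MvRatS F k m) (MvPolynomial.translate (shiftVector α) g) :=
  MvPolynomial.algEquiv_apply_algebraMap_eq_algebraMap_translate _
    (thetaPowS_xvS hσ hσfix α) g

end Shifts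

theorem mem_isotropyZ_of_nsmul_mem {F : Type*} [Field F] [CharZero F] {k m : ℕ}
    {σ : Fin k → (MvRatS F k m ≃ₐ[F] MvRatS F k m)}
    (hσ : ∀ j, σ j (xvS (Sum.inl j)) = xvS (Sum.inl j) + 1)
    (hσfix : ∀ j i, i ≠ Sum.inl j → σ j (xvS i) = xvS i)
    (hadd : ∀ α β : Fin k → ℤ, thetaPowS σ (α + β) = thetaPowS σ α * thetaPowS σ β)
    (h0 : thetaPowS σ (0 : Fin k → ℤ) = 1)
    {p : MvPolynomial (Fin k ⊕ Fin m) F} (hp : p ≠ 0) {n : ℕ} (hn : n ≠ 0) {α : Fin k → ℤ}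
    (h : n • α ∈ isotropyZ (thetaPowS σ) hadd h0 (algebraMap _ (MvRatS F k m) p)) :
    α ∈ isotropyZ (thetaPowS σ) hadd h0 (algebraMap _ (MvRatS F k m) p) := by
  obtain ⟨c, -, hc⟩ := h
  have htranslate :
      MvPolynomial.translate ((n : F) • shiftVector α) p = MvPolynomial.C c * p := by
    apply IsFractionRing.injective (MvPolynomial (Fin k ⊕ Fin m) F) (MvRatS F k m)
    rw [← shiftVector_nsmul, ← thetaPowS_algebraMap hσ hσfix, hc, map_mul,
      ← MvPolynomial.algebraMap_eq, ← IsScalarTower.algebraMap_apply]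
  rw [MvPolynomial.eq_one_of_translate_eq_C_mul hp htranslate, map_one, one_mul] at htranslate
  have hinvariant := MvPolynomial.translate_smul_eq_self htranslate (n : F)⁻¹
  rw [smul_smul, inv_mul_cancel₀ (Nat.cast_ne_zero.mpr hn), one_smul] at hinvariant
  exact ⟨1, one_ne_zero, by rw [thetaPowS_algebraMap hσ hσfix, hinvariant, map_one, one_mul]⟩

theorem stmt_4_general {F : Type*} [Field F] [CharZero F] {k m : ℕ}
    (σ : Fin k → (MvRatS F k m ≃ₐ[F] MvRatS F k m))
    (hσ : ∀ j, σ j (xvS (Sum.inl j)) = xvS (Sum.inl j) + 1)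
    (hσfix : ∀ j i, i ≠ Sum.inl j → σ j (xvS i) = xvS i)
    (hadd : ∀ α β : Fin k → ℤ, thetaPowS σ (α + β) = thetaPowS σ α * thetaPowS σ β)
    (h0 : thetaPowS σ (0 : Fin k → ℤ) = 1)
    (p : MvPolynomial (Fin k ⊕ Fin m) F) (hp : 0 < p.totalDegree) :
    Module.Free ℤ ((Fin k → ℤ) ⧸ isotropyZ (thetaPowS σ) hadd h0
      (algebraMap (MvPolynomial (Fin k ⊕ Fin m) F) (MvRatS F k m) p)) := by
  have hp0 : p ≠ 0 := by
    rintro rfl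
    simp at hp
  exact QuotientAddGroup.free_of_nsmul_mem fun _ _ hn hmem =>
    mem_isotropyZ_of_nsmul_mem hσ hσfix hadd h0 hp0 hn hmem

set_option maxHeartbeats 1000000 in
/-- **Sato: `G^σ/G^σ_p` is free abelian.** Let `p ∈ F[x]` be nonconstant.
Then the quotient of the free abelian group `G^σ = ⟨σ_{y₁},…,σ_{y_k}⟩` (identified with
`ℤ^k` via exponent vectors) by the isotropy group `G^σ_p` of `p` is a free abelian group. -/
theorem stmt_4 {F : Type*} [Field F] [CharZero F] {k m : ℕ}
    (q : F) (hq0 : q ≠ 0) (hq : ∀ l : ℤ, l ≠ 0 → q ^ l ≠ 1)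
    (σ : Fin k → (MvRatS F k m ≃ₐ[F] MvRatS F k m))
    (hσ : ∀ j, σ j (xvS (Sum.inl j)) = xvS (Sum.inl j) + 1)
    (hσfix : ∀ j i, i ≠ Sum.inl j → σ j (xvS i) = xvS i)
    (τ : Fin m → (MvRatS F k m ≃ₐ[F] MvRatS F k m))
    (hτ : ∀ j, τ j (xvS (Sum.inr j)) = algebraMap F (MvRatS F k m) q * xvS (Sum.inr j))
    (hτfix : ∀ j i, i ≠ Sum.inr j → τ j (xvS i) = xvS i)
    (hadd : ∀ α β : Fin k → ℤ, thetaPowS σ (α + β) = thetaPowS σ α * thetaPowS σ β)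
    (h0 : thetaPowS σ (0 : Fin k → ℤ) = 1)
    (p : MvPolynomial (Fin k ⊕ Fin m) F) (hp : 0 < p.totalDegree) :
    Module.Free ℤ ((Fin k → ℤ) ⧸ isotropyZ (thetaPowS σ) hadd h0
      (algebraMap (MvPolynomial (Fin k ⊕ Fin m) F) (MvRatS F k m) p)) :=
  stmt_4_general σ hσ hσfix hadd h0 p hp
end

section
/- Let p ∈ F[x] be a nonconstant polynomial. Then the quotient group G^τ/G^τ_p of the free abelian group G^τ = ⟨τ_{q,z₁},…,τ_{q,z_m}⟩ by the isotropy group G^τ_p of p in G^τ is a free abelian group; equivalently, if τ₀ ∈ G^τ and τ₀^ℓ(p) = c·p for some nonzero integer ℓ and nonzero c ∈ F, then τ₀(p) = c̃·p for some nonzero c̃ ∈ F. -/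
/-!
Every generator `τ_{q,z_j}` multiplies the variables by powers of `q`, so the element of `G^τ`
with exponent vector `β` multiplies the monomial `x^e` of `p` by `q^⟨β, e_z⟩`. If `τ^{ℓβ}(p) = c·p`,
then `q^{ℓ⟨β, e_z⟩} = c` for every monomial `x^e` of `p`; as `q` is not a root of unity,
`⟨β, e_z⟩` takes a single value on the support of `p`, and `τ^β(p)` is `p` times that power of `q`.
Thus `G^τ_p` is saturated in `ℤ^m`, and the quotient is finitely generated and torsion-free,
hence free.
-/

open MvPolynomial

theorem Finsupp.weight_zsmul {σ : Type*} (ℓ : ℤ) (γ : σ → ℤ) (e : σ →₀ ℕ) :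
    Finsupp.weight (ℓ • γ) e = ℓ * Finsupp.weight γ e := by
  simp only [Finsupp.weight_apply, Finsupp.mul_sum, Pi.smul_apply, smul_eq_mul]
  exact Finsupp.sum_congr fun i _ => by rw [nsmul_eq_mul, nsmul_eq_mul]; ring

theorem AddSubgroup.free_quotient_of_zsmul_mem {M : Type*} [AddCommGroup M] [Module.Finite ℤ M]
    (H : AddSubgroup M) (hH : ∀ (ℓ : ℤ) (x : M), ℓ ≠ 0 → ℓ • x ∈ H → x ∈ H) :
    Module.Free ℤ (M ⧸ H) := by
  have : Module.Finite ℤ (M ⧸ H) :=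
    Module.Finite.of_surjective (QuotientAddGroup.mk' H).toIntLinearMap
      (QuotientAddGroup.mk'_surjective H)
  have : Module.IsTorsionFree ℤ (M ⧸ H) := by
    refine .of_smul_eq_zero fun ℓ x hx => or_iff_not_imp_left.2 fun hℓ => ?_
    induction x using QuotientAddGroup.induction_on with | H x => ?_
    exact (QuotientAddGroup.eq_zero_iff x).2 (hH ℓ x hℓ ((QuotientAddGroup.eq_zero_iff _).1 hx))
  exact Module.free_of_finite_type_torsion_free'

namespace MvPolynomial

variable {σ R : Type*} [CommRing R]

noncomputable def diagScale (q : Rˣ) (γ : σ → ℤ) : MvPolynomial σ R →ₐ[R] MvPolynomial σ R :=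
  aeval fun i => C (↑(q ^ γ i) : R) * X i

theorem diagScale_monomial (q : Rˣ) (γ : σ → ℤ) (e : σ →₀ ℕ) (a : R) :
    diagScale q γ (monomial e a) = monomial e (↑(q ^ Finsupp.weight γ e) * a) := by
  have hweight : ∏ i ∈ e.support, (↑(q ^ γ i) : R) ^ e i = ↑(q ^ Finsupp.weight γ e) := by
    have := map_prod (zpowersHom Rˣ q) (fun i => Multiplicative.ofAdd (e i • γ i)) e.support
    simp only [zpowersHom_apply, toAdd_prod, toAdd_ofAdd] at this
    rw [Finsupp.weight_apply, Finsupp.sum, this, Units.coe_prod]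
    simp [zpow_natCast, zpow_mul']
  rw [diagScale, aeval_monomial, monomial_eq, Finsupp.prod, Finsupp.prod]
  simp only [mul_pow, Finset.prod_mul_distrib, ← map_pow, ← map_prod, algebraMap_eq, hweight, C_mul]
  ring

theorem coeff_diagScale (q : Rˣ) (γ : σ → ℤ) (p : MvPolynomial σ R) (e : σ →₀ ℕ) :
    coeff e (diagScale q γ p) = ↑(q ^ Finsupp.weight γ e) * coeff e p := by
  classical
  induction p using MvPolynomial.induction_on' with
  | monomial s a =>
    rw [diagScale_monomial, coeff_monomial, coeff_monomial]
    split_ifs with h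
    · rw [h]
    · rw [mul_zero]
  | add p p' hp hp' => rw [map_add, coeff_add, coeff_add, hp, hp', mul_add]

theorem diagScale_eq_C_mul_of_zsmul [IsDomain R] {q : Rˣ} (hq : ¬IsOfFinOrder q) {γ : σ → ℤ}
    {ℓ : ℤ} (hℓ : ℓ ≠ 0) {p : MvPolynomial σ R} (hp : p ≠ 0) {c : R}
    (h : diagScale q (ℓ • γ) p = C c * p) : ∃ c' : Rˣ, diagScale q γ p = C (c' : R) * p := by
  have hc : ∀ e ∈ p.support, ((q ^ (ℓ * Finsupp.weight γ e) : Rˣ) : R) = c := fun e he => by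
    have := congrArg (coeff e) h
    rw [coeff_diagScale, coeff_C_mul, Finsupp.weight_zsmul] at this
    exact mul_right_cancel₀ (mem_support_iff.1 he) this
  obtain ⟨e₀, he₀⟩ := support_nonempty.2 hp
  refine ⟨q ^ Finsupp.weight γ e₀, ext _ _ fun e => ?_⟩
  rw [coeff_diagScale, coeff_C_mul]
  by_cases he : e ∈ p.support
  · have hq_inj := injective_zpow_iff_not_isOfFinOrder.2 hq
    have : ℓ * Finsupp.weight γ e = ℓ * Finsupp.weight γ e₀ :=
      hq_inj (Units.val_injective ((hc e he).trans (hc e₀ he₀).symm))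
    rw [mul_left_cancel₀ hℓ this]
  · rw [notMem_support_iff.1 he, mul_zero, mul_zero]

end MvPolynomial

section DiagonalScaling

variable {σ R : Type*} [CommRing R]

local notation "K" => FractionRing (MvPolynomial σ R)

def IsDiagonalScaling (q : Rˣ) (γ : σ → ℤ) (θ : K ≃ₐ[R] K) : Prop :=
  ∀ i, θ (algebraMap (MvPolynomial σ R) K (X i)) =
    algebraMap R K ↑(q ^ γ i) * algebraMap (MvPolynomial σ R) K (X i)

variable {q : Rˣ}

theorem isDiagonalScaling_one : IsDiagonalScaling q 0 (1 : K ≃ₐ[R] K) := by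
  simp [IsDiagonalScaling]

theorem IsDiagonalScaling.mul {γ γ' : σ → ℤ} {θ θ' : K ≃ₐ[R] K} (hθ : IsDiagonalScaling q γ θ)
    (hθ' : IsDiagonalScaling q γ' θ') : IsDiagonalScaling q (γ + γ') (θ * θ') := by
  intro i
  rw [AlgEquiv.mul_apply, hθ' i, map_mul, AlgEquiv.commutes, hθ i, Pi.add_apply, zpow_add,
    Units.val_mul, map_mul]
  ring

theorem IsDiagonalScaling.inv {γ : σ → ℤ} {θ : K ≃ₐ[R] K} (hθ : IsDiagonalScaling q γ θ) :
    IsDiagonalScaling q (-γ) θ⁻¹ := by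
  intro i
  have h := congrArg (⇑θ⁻¹) (hθ i)
  rw [← AlgEquiv.mul_apply, inv_mul_cancel, AlgEquiv.one_apply, map_mul, AlgEquiv.commutes] at h
  conv_rhs => rw [h]
  rw [← mul_assoc, ← map_mul, ← Units.val_mul, Pi.neg_apply, zpow_neg, inv_mul_cancel,
    Units.val_one, map_one, one_mul]

theorem IsDiagonalScaling.zpow {γ : σ → ℤ} {θ : K ≃ₐ[R] K} (hθ : IsDiagonalScaling q γ θ)
    (n : ℤ) : IsDiagonalScaling q (n • γ) (θ ^ n) := by
  induction n using Int.induction_on with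
  | zero => simpa using isDiagonalScaling_one
  | succ n ih =>
    rw [add_smul, one_smul, zpow_add_one]
    exact ih.mul hθ
  | pred n ih =>
    rw [sub_smul, one_smul, sub_eq_add_neg, zpow_sub_one]
    exact ih.mul hθ.inv

theorem IsDiagonalScaling.list_prod {ι : Type*} {l : List ι} {γ : ι → σ → ℤ}
    {θ : ι → K ≃ₐ[R] K} (h : ∀ j ∈ l, IsDiagonalScaling q (γ j) (θ j)) :
    IsDiagonalScaling q (l.map γ).sum (l.map θ).prod := by
  induction l with
  | nil => simpa using isDiagonalScaling_one
  | cons j l ih =>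
    simpa using (h j List.mem_cons_self).mul (ih fun j' hj' => h j' (List.mem_cons_of_mem j hj'))

theorem isDiagonalScaling_thetaPowS {ι : Type*} [Fintype ι] {γ : ι → σ → ℤ}
    {θ : ι → K ≃ₐ[R] K} (h : ∀ j, IsDiagonalScaling q (γ j) (θ j)) (β : ι → ℤ) :
    IsDiagonalScaling q (Fintype.linearCombination ℤ γ β) (thetaPowS θ β) := by
  rw [thetaPowS, Fintype.linearCombination_apply, ← Finset.sum_map_toList]
  exact IsDiagonalScaling.list_prod fun j _ => (h j).zpow (β j)

theorem IsDiagonalScaling.apply_algebraMap {γ : σ → ℤ} {θ : K ≃ₐ[R] K}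
    (hθ : IsDiagonalScaling q γ θ) (p : MvPolynomial σ R) :
    θ (algebraMap _ K p) = algebraMap _ K (diagScale q γ p) := by
  suffices (θ : K →ₐ[R] K).comp (IsScalarTower.toAlgHom R _ K) =
      (IsScalarTower.toAlgHom R _ K).comp (diagScale q γ) from DFunLike.congr_fun this p
  refine algHom_ext fun i => ?_
  simp [diagScale, hθ i, IsScalarTower.algebraMap_apply R (MvPolynomial σ R) K]

theorem IsDiagonalScaling.exists_apply_eq_mul_of_zsmul [IsDomain R] (hq : ¬IsOfFinOrder q)
    {γ : σ → ℤ} {ℓ : ℤ} (hℓ : ℓ ≠ 0) {θ θ' : K ≃ₐ[R] K} (hθ : IsDiagonalScaling q γ θ)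
    (hθ' : IsDiagonalScaling q (ℓ • γ) θ') {p : MvPolynomial σ R} (hp : p ≠ 0) {c : R}
    (h : θ' (algebraMap _ K p) = algebraMap R K c * algebraMap _ K p) :
    ∃ c' : Rˣ, θ (algebraMap _ K p) = algebraMap R K c' * algebraMap _ K p := by
  have halg (a : R) : algebraMap R K a = algebraMap (MvPolynomial σ R) K (C a) :=
    IsScalarTower.algebraMap_apply R (MvPolynomial σ R) K a
  rw [hθ'.apply_algebraMap, halg, ← map_mul] at h
  obtain ⟨c', hc'⟩ :=
    diagScale_eq_C_mul_of_zsmul hq hℓ hp (IsFractionRing.injective (MvPolynomial σ R) K h)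
  exact ⟨c', by rw [hθ.apply_algebraMap, hc', map_mul, halg]⟩

end DiagonalScaling

theorem stmt_5_general {F : Type*} [Field F] {k m : ℕ}
    (q : F) (hq0 : q ≠ 0) (hq : ∀ l : ℤ, l ≠ 0 → q ^ l ≠ 1)
    (τ : Fin m → (MvRatS F k m ≃ₐ[F] MvRatS F k m))
    (hτ : ∀ j, τ j (xvS (Sum.inr j)) = algebraMap F (MvRatS F k m) q * xvS (Sum.inr j))
    (hτfix : ∀ j i, i ≠ Sum.inr j → τ j (xvS i) = xvS i)
    (hadd : ∀ α β : Fin m → ℤ, thetaPowS τ (α + β) = thetaPowS τ α * thetaPowS τ β)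
    (h0 : thetaPowS τ (0 : Fin m → ℤ) = 1)
    (p : MvPolynomial (Fin k ⊕ Fin m) F) (hp : 0 < p.totalDegree) :
    Module.Free ℤ ((Fin m → ℤ) ⧸ isotropyZ (thetaPowS τ) hadd h0
      (algebraMap (MvPolynomial (Fin k ⊕ Fin m) F) (MvRatS F k m) p)) ∧
    (∀ (β : Fin m → ℤ) (ℓ : ℤ), ℓ ≠ 0 → ∀ c : F, c ≠ 0 →
      thetaPowS τ (ℓ • β) (algebraMap (MvPolynomial (Fin k ⊕ Fin m) F) (MvRatS F k m) p) =
        algebraMap F (MvRatS F k m) c *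
          algebraMap (MvPolynomial (Fin k ⊕ Fin m) F) (MvRatS F k m) p →
      ∃ ct : F, ct ≠ 0 ∧
        thetaPowS τ β (algebraMap (MvPolynomial (Fin k ⊕ Fin m) F) (MvRatS F k m) p) =
          algebraMap F (MvRatS F k m) ct *
            algebraMap (MvPolynomial (Fin k ⊕ Fin m) F) (MvRatS F k m) p) := by
  set Q := Units.mk0 q hq0
  have hQ : ¬IsOfFinOrder Q := fun h => by
    obtain ⟨l, hl, hQl⟩ := isOfFinOrder_iff_zpow_eq_one.1 h
    exact hq l hl (by simpa [Q] using congrArg Units.val hQl)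
  have hτQ (j : Fin m) : IsDiagonalScaling Q (Pi.single (Sum.inr j) 1) (τ j) := fun i => by
    by_cases hi : i = Sum.inr j
    · subst hi
      simpa [Q, xvS] using hτ j
    · simpa [hi, xvS] using hτfix j i hi
  have hp0 : p ≠ 0 := by
    rintro rfl
    simp at hp
  have hscalar (β : Fin m → ℤ) (ℓ : ℤ) (hℓ : ℓ ≠ 0) (c : F) (_ : c ≠ 0)
      (h : thetaPowS τ (ℓ • β) (algebraMap _ (MvRatS F k m) p) =
        algebraMap F (MvRatS F k m) c * algebraMap _ (MvRatS F k m) p) :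
      ∃ ct : F, ct ≠ 0 ∧ thetaPowS τ β (algebraMap _ (MvRatS F k m) p) =
        algebraMap F (MvRatS F k m) ct * algebraMap _ (MvRatS F k m) p := by
    have hθ' := isDiagonalScaling_thetaPowS hτQ (ℓ • β)
    rw [map_zsmul] at hθ'
    obtain ⟨c', hc'⟩ :=
      (isDiagonalScaling_thetaPowS hτQ β).exists_apply_eq_mul_of_zsmul hQ hℓ hθ' hp0 h
    exact ⟨c', c'.ne_zero, hc'⟩
  exact ⟨AddSubgroup.free_quotient_of_zsmul_mem _ fun ℓ β hℓ ⟨c, hc, h⟩ => hscalar β ℓ hℓ c hc h,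
    hscalar⟩

set_option maxHeartbeats 1000000 in
/-- **`G^τ/G^τ_p` is free abelian.** Let `p ∈ F[x]` be nonconstant. Then the
quotient of the free abelian group `G^τ = ⟨τ_{q,z₁},…,τ_{q,z_m}⟩` (identified with `ℤ^m`
via exponent vectors) by the isotropy group `G^τ_p` of `p` is free abelian; equivalently,
if `τ₀ ∈ G^τ` and `τ₀^ℓ(p) = c·p` for some nonzero `ℓ ∈ ℤ` and nonzero `c ∈ F`, then
`τ₀(p) = c̃·p` for some nonzero `c̃ ∈ F`. -/
theorem stmt_5 {F : Type*} [Field F] [CharZero F] {k m : ℕ}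
    (q : F) (hq0 : q ≠ 0) (hq : ∀ l : ℤ, l ≠ 0 → q ^ l ≠ 1)
    (σ : Fin k → (MvRatS F k m ≃ₐ[F] MvRatS F k m))
    (hσ : ∀ j, σ j (xvS (Sum.inl j)) = xvS (Sum.inl j) + 1)
    (hσfix : ∀ j i, i ≠ Sum.inl j → σ j (xvS i) = xvS i)
    (τ : Fin m → (MvRatS F k m ≃ₐ[F] MvRatS F k m))
    (hτ : ∀ j, τ j (xvS (Sum.inr j)) = algebraMap F (MvRatS F k m) q * xvS (Sum.inr j))
    (hτfix : ∀ j i, i ≠ Sum.inr j → τ j (xvS i) = xvS i)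
    (hadd : ∀ α β : Fin m → ℤ, thetaPowS τ (α + β) = thetaPowS τ α * thetaPowS τ β)
    (h0 : thetaPowS τ (0 : Fin m → ℤ) = 1)
    (p : MvPolynomial (Fin k ⊕ Fin m) F) (hp : 0 < p.totalDegree) :
    Module.Free ℤ ((Fin m → ℤ) ⧸ isotropyZ (thetaPowS τ) hadd h0
      (algebraMap (MvPolynomial (Fin k ⊕ Fin m) F) (MvRatS F k m) p)) ∧
    (∀ (β : Fin m → ℤ) (ℓ : ℤ), ℓ ≠ 0 → ∀ c : F, c ≠ 0 →
      thetaPowS τ (ℓ • β) (algebraMap (MvPolynomial (Fin k ⊕ Fin m) F) (MvRatS F k m) p) =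
        algebraMap F (MvRatS F k m) c *
          algebraMap (MvPolynomial (Fin k ⊕ Fin m) F) (MvRatS F k m) p →
      ∃ ct : F, ct ≠ 0 ∧
        thetaPowS τ β (algebraMap (MvPolynomial (Fin k ⊕ Fin m) F) (MvRatS F k m) p) =
          algebraMap F (MvRatS F k m) ct *
            algebraMap (MvPolynomial (Fin k ⊕ Fin m) F) (MvRatS F k m) p) :=
  stmt_5_general q hq0 hq τ hτ hτfix hadd h0 p hp
end

section
/- Let F be a field of characteristic zero, let θ be either the shift operator σ (x ↦ x+1) or the q-shift operator τ_q (x ↦ q·x) on F(x) in one variable x, let c ∈ F be nonzero, let j ≥ 1, let d ∈ F[x] be irreducible and normal with respect to θ, and let a ∈ F[x] with deg(a) < deg(d). Then a/d^j is (c·θ)-summable in F(x), i.e., a/d^j = c·θ(g) − g for some g ∈ F(x), if and only if a = 0. -/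
/-!
Let `φ` be the automorphism of `F[X]` induced by `θ` and `d_ℓ = φ^ℓ(d)`; by normality the `d_ℓ`
are pairwise non-associated primes, and `θ` carries a pole of `g` at `d_ℓ` to a pole of `c·θ(g)`
at `d_{ℓ+1}`. Since `deg a < deg d`, a nonzero `a / d^j` has a pole at `d_0` and nowhere else. In
`a / d^j = c·θ(g) - g` the pole at `d_0` forces `g` to have a pole at `d_0` or at `d_{-1}`, and
comparing both sides at every `d_ℓ` with `ℓ ≠ 0` then spreads it to all `d_ℓ` with `ℓ ≥ 0`,
resp. `ℓ < 0`. This contradicts the finiteness of the set of poles of `g`.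
-/

open scoped Polynomial
open Function

section ShiftedSubgroups

variable {A S : Type*} [AddCommGroup A] [SetLike S A] [AddSubgroupClass S A]

theorem sub_mem_zero_of_forall_ne_zero {R : ℤ → S} {L : A → A}
    (hL : ∀ ℓ x, L x ∈ R (ℓ + 1) ↔ x ∈ R ℓ) {g : A} (hg : {ℓ | g ∉ R ℓ}.Finite)
    (h : ∀ ℓ ≠ 0, L g - g ∈ R ℓ) : L g - g ∈ R 0 := by
  by_contra h0
  have up : ∀ ℓ : ℤ, 0 ≤ ℓ → g ∉ R ℓ → g ∉ R (ℓ + 1) := fun ℓ hℓ hgℓ hg' =>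
    hgℓ ((hL ℓ g).1 (by simpa using add_mem (h (ℓ + 1) (by omega)) hg'))
  have down : ∀ ℓ : ℤ, ℓ < 0 → g ∉ R ℓ → g ∉ R (ℓ - 1) := fun ℓ hℓ hgℓ hg' => by
    have hLg : L g ∈ R ℓ := by simpa using (hL (ℓ - 1) g).2 hg'
    exact hgℓ (by simpa using sub_mem hLg (h ℓ hℓ.ne))
  have start : g ∉ R 0 ∨ g ∉ R (-1) := by
    by_contra! ⟨hg0, hg1⟩
    exact h0 (sub_mem (by simpa using (hL (-1) g).2 hg1) hg0)
  rcases start with hg0 | hg1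
  · refine (Set.Ici_infinite 0).mono (fun ℓ (hℓ : 0 ≤ ℓ) => ?_) hg
    induction ℓ, hℓ using Int.leInduction with
    | base => exact hg0
    | succ n hn ih => exact up n hn ih
  · refine (Set.Iic_infinite (-1)).mono (fun ℓ (hℓ : ℓ ≤ -1) => ?_) hg
    induction ℓ, hℓ using Int.leInductionDown with
    | base => exact hg1
    | pred n hn ih => exact down n (by omega) ih

end ShiftedSubgroups

theorem UniqueFactorizationMonoid.finite_setOf_dvd {α ι : Type*} [CommMonoidWithZero α]
    [NormalizationMonoid α] [UniqueFactorizationMonoid α] {p : ι → α}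
    (hp : ∀ i, Irreducible (p i)) (hinj : ∀ i j, Associated (p i) (p j) → i = j) {r : α}
    (hr : r ≠ 0) : {i | p i ∣ r}.Finite := by
  refine ((primeFactors r).finite_toSet.preimage (f := normalize ∘ p) ?_).subset fun i hi => ?_
  · exact fun i _ j _ h => hinj i j (normalize_eq_normalize_iff_associated.1 h)
  · rw [Set.mem_preimage, Finset.mem_coe, mem_primeFactors, mem_normalizedFactors_iff' hr]
    exact ⟨(normalize_associated _).symm.irreducible (hp i), normalize_idem _,
      normalize_dvd_iff.2 hi⟩

theorem Function.Semiconj.algEquiv_zpow {R A B : Type*} [CommSemiring R] [Semiring A]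
    [Semiring B] [Algebra R A] [Algebra R B] {f : A → B} {φ : A ≃ₐ[R] A} {θ : B ≃ₐ[R] B}
    (h : Semiconj f φ θ) (ℓ : ℤ) : Semiconj f ⇑(φ ^ ℓ) ⇑(θ ^ ℓ) := by
  have hinv : Semiconj f ⇑φ⁻¹ ⇑θ⁻¹ := h.inverses_right φ.apply_symm_apply θ.symm_apply_apply
  induction ℓ using Int.induction_on with
  | zero => exact Semiconj.id_right
  | succ n ih =>
    intro x
    rw [zpow_add_one, zpow_add_one, AlgEquiv.mul_apply, AlgEquiv.mul_apply, ih, h]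
  | pred n ih =>
    intro x
    rw [zpow_sub_one, zpow_sub_one, AlgEquiv.mul_apply, AlgEquiv.mul_apply, ih, hinv]

theorem AlgEquiv.associated_zpow_apply_iff {R A : Type*} [CommSemiring R] [CommSemiring A]
    [Algebra R A] (φ : A ≃ₐ[R] A) {d : A} (hd : ∀ ℓ : ℤ, ℓ ≠ 0 → ¬ d ∣ (φ ^ ℓ) d) {i k : ℤ} :
    Associated ((φ ^ i) d) ((φ ^ k) d) ↔ i = k := by
  refine ⟨fun h => ?_, by rintro rfl; rfl⟩
  by_contra hik
  refine hd (k - i) (sub_ne_zero.2 (Ne.symm hik)) ((map_dvd_iff (φ ^ i)).1 ?_)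
  rw [← AlgEquiv.mul_apply, ← zpow_add, add_sub_cancel]
  exact h.dvd

namespace RatFunc

variable {F : Type*} [Field F]

/-- The localization of `F[X]` at the prime ideal `(p)`, inside `F(X)`. -/
def regularAt {p : F[X]} (hp : Prime p) : Subalgebra F (RatFunc F) where
  carrier := {x | ¬ p ∣ x.denom}
  mul_mem' {x y} hx hy h := (hp.dvd_or_dvd (h.trans (denom_mul_dvd x y))).elim hx hy
  add_mem' {x y} hx hy h := (hp.dvd_or_dvd (h.trans (denom_add_dvd x y))).elim hx hy
  algebraMap_mem' c := by
    rw [Set.mem_ofPred_eq, algebraMap_eq_C, ← algebraMap_C, denom_algebraMap]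
    exact hp.not_dvd_one

theorem mem_regularAt {p : F[X]} (hp : Prime p) {x : RatFunc F} :
    x ∈ regularAt hp ↔ ¬ p ∣ x.denom :=
  Iff.rfl

theorem div_mem_regularAt {p : F[X]} (hp : Prime p) (a : F[X]) {b : F[X]} (hb : ¬ p ∣ b) :
    algebraMap F[X] (RatFunc F) a / algebraMap F[X] (RatFunc F) b ∈ regularAt hp :=
  fun h => hb (h.trans (denom_div_dvd a b))

theorem dvd_denom_div {a b : F[X]} (hab : IsCoprime a b) (hb : b ≠ 0) :
    b ∣ (algebraMap F[X] (RatFunc F) a / algebraMap F[X] (RatFunc F) b).denom :=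
  hab.symm.dvd_of_dvd_mul_left (Dvd.intro_left _ ((num_mul_eq_mul_denom_iff hb).2 rfl))

theorem div_pow_notMem_regularAt {p : F[X]} (hp : Prime p) {a : F[X]} (ha : ¬ p ∣ a) {j : ℕ}
    (hj : j ≠ 0) :
    algebraMap F[X] (RatFunc F) a / algebraMap F[X] (RatFunc F) p ^ j ∉ regularAt hp := by
  have hcop : IsCoprime a (p ^ j) := ((hp.irreducible.coprime_iff_not_dvd.2 ha).pow_left).symm
  rw [← map_pow, mem_regularAt, not_not]
  exact (dvd_pow_self p hj).trans (dvd_denom_div hcop (pow_ne_zero j hp.ne_zero))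

theorem associated_denom_apply {θ : RatFunc F ≃ₐ[F] RatFunc F} {φ : F[X] ≃ₐ[F] F[X]}
    (hθφ : Semiconj (algebraMap F[X] (RatFunc F)) φ θ) (x : RatFunc F) :
    Associated (θ x).denom (φ x.denom) := by
  have hx : θ x = algebraMap _ _ (φ x.num) / algebraMap _ _ (φ x.denom) := by
    conv_lhs => rw [← num_div_denom x]
    rw [map_div₀, ← hθφ, ← hθφ]
  rw [hx]
  refine associated_of_dvd_dvd (denom_div_dvd _ _) (dvd_denom_div ?_ ?_)
  · exact (isCoprime_num_denom x).map (φ : F[X] →+* F[X])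
  · exact (map_ne_zero_iff φ φ.injective).2 (denom_ne_zero x)

theorem apply_mem_regularAt_iff {θ : RatFunc F ≃ₐ[F] RatFunc F} {φ : F[X] ≃ₐ[F] F[X]}
    (hθφ : Semiconj (algebraMap F[X] (RatFunc F)) φ θ) {p q : F[X]} (hp : Prime p) (hq : Prime q)
    (hpq : φ p = q) {x : RatFunc F} : θ x ∈ regularAt hq ↔ x ∈ regularAt hp := by
  subst hpq
  rw [mem_regularAt, mem_regularAt, (associated_denom_apply hθφ x).dvd_iff_dvd_right, map_dvd_iff]

theorem finite_setOf_notMem_regularAt {ι : Type*} {p : ι → F[X]} (hp : ∀ i, Prime (p i))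
    (hinj : ∀ i j, Associated (p i) (p j) → i = j) (x : RatFunc F) :
    {i | x ∉ regularAt (hp i)}.Finite := by
  classical
  simpa only [mem_regularAt, not_not] using
    UniqueFactorizationMonoid.finite_setOf_dvd (fun i => (hp i).irreducible) hinj (denom_ne_zero x)

theorem semiconj_aeval_of_apply_X {θ : RatFunc F ≃ₐ[F] RatFunc F} {s : F[X]}
    (h : θ X = algebraMap F[X] (RatFunc F) s) :
    Semiconj (algebraMap F[X] (RatFunc F)) (Polynomial.aeval s) θ := fun r => by
  rw [← aeval_X_left_eq_algebraMap r, ← Polynomial.aeval_algHom_apply θ, h,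
    Polynomial.aeval_algebraMap_apply]

theorem exists_semiconj_of_apply_X {θ : RatFunc F ≃ₐ[F] RatFunc F} {a : F} (ha : a ≠ 0) (b : F)
    (h : θ X = algebraMap F[X] (RatFunc F) (Polynomial.C a * Polynomial.X + Polynomial.C b)) :
    ∃ φ : F[X] ≃ₐ[F] F[X], Semiconj (algebraMap F[X] (RatFunc F)) φ θ := by
  let := invertibleOfNonzero ha
  exact ⟨Polynomial.algEquivCMulXAddC a b, fun r => by
    rw [Polynomial.algEquivCMulXAddC_apply, semiconj_aeval_of_apply_X h r]⟩

theorem div_pow_ne_mul_apply_sub {p : F[X]} (hp : Prime p) {θ : RatFunc F ≃ₐ[F] RatFunc F}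
    {φ : F[X] ≃ₐ[F] F[X]} (hθφ : Semiconj (algebraMap F[X] (RatFunc F)) φ θ) {c : F} (hc : c ≠ 0)
    (hnormal : ∀ ℓ : ℤ, ℓ ≠ 0 → ¬ p ∣ (φ ^ ℓ) p) {a : F[X]} (ha : ¬ p ∣ a) {j : ℕ} (hj : j ≠ 0)
    (g : RatFunc F) :
    algebraMap F[X] (RatFunc F) a / algebraMap F[X] (RatFunc F) p ^ j ≠
      algebraMap F (RatFunc F) c * θ g - g := by
  have hprime (ℓ : ℤ) : Prime ((φ ^ ℓ) p) := (MulEquiv.prime_iff _).2 hp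
  have hassoc (i k : ℤ) : Associated ((φ ^ i) p) ((φ ^ k) p) → i = k :=
    (φ.associated_zpow_apply_iff hnormal).1
  have hshift (ℓ : ℤ) (y : RatFunc F) :
      algebraMap F (RatFunc F) c * θ y ∈ regularAt (hprime (ℓ + 1)) ↔
        y ∈ regularAt (hprime ℓ) := by
    rw [← Algebra.smul_def, ← Subalgebra.mem_toSubmodule, Submodule.smul_mem_iff _ hc,
      Subalgebra.mem_toSubmodule]
    exact apply_mem_regularAt_iff hθφ (hprime ℓ) _
      (by rw [add_comm, zpow_one_add, AlgEquiv.mul_apply])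
  have hoff (ℓ : ℤ) (hℓ : ℓ ≠ 0) :
      algebraMap F[X] (RatFunc F) a / algebraMap F[X] (RatFunc F) p ^ j ∈
        regularAt (hprime ℓ) := by
    rw [← map_pow]
    refine div_mem_regularAt _ a fun h => hℓ (hassoc ℓ 0 ?_)
    simpa using (hprime ℓ).irreducible.associated_of_dvd hp.irreducible
      ((hprime ℓ).dvd_of_dvd_pow h)
  intro hg
  have := sub_mem_zero_of_forall_ne_zero hshift (finite_setOf_notMem_regularAt hprime hassoc g)
    (fun ℓ hℓ => hg ▸ hoff ℓ hℓ)
  rw [← hg] at this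
  exact div_pow_notMem_regularAt hp ha hj (by simpa [mem_regularAt] using this)

end RatFunc

theorem stmt_8_general {F : Type*} [Field F]
    (q : F) (hq0 : q ≠ 0)
    (θ : RatFunc F ≃ₐ[F] RatFunc F)
    (hθ : θ RatFunc.X = RatFunc.X + 1 ∨ θ RatFunc.X = algebraMap F (RatFunc F) q * RatFunc.X)
    (c : F) (hc : c ≠ 0) (j : ℕ) (hj : 1 ≤ j)
    (d : Polynomial F) (hd : Irreducible d)
    (hnormal : ∀ ℓ : ℤ, ℓ ≠ 0 → ∀ w : Polynomial F, w ∣ d →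
      (∃ u : Polynomial F,
        (θ ^ ℓ) (algebraMap (Polynomial F) (RatFunc F) d) =
          algebraMap (Polynomial F) (RatFunc F) w * algebraMap (Polynomial F) (RatFunc F) u) →
      IsUnit w)
    (a : Polynomial F) (ha : a.degree < d.degree) :
    (∃ g : RatFunc F,
        algebraMap (Polynomial F) (RatFunc F) a / algebraMap (Polynomial F) (RatFunc F) d ^ j =
          algebraMap F (RatFunc F) c * θ g - g) ↔ a = 0 := by
  refine ⟨fun ⟨g, hg⟩ => ?_, by rintro rfl; exact ⟨0, by simp⟩⟩
  obtain ⟨φ, hφ⟩ : ∃ φ : Polynomial F ≃ₐ[F] Polynomial F,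
      Function.Semiconj (algebraMap (Polynomial F) (RatFunc F)) φ θ := by
    rcases hθ with h | h
    · exact RatFunc.exists_semiconj_of_apply_X one_ne_zero 1 (by simp [h])
    · exact RatFunc.exists_semiconj_of_apply_X hq0 0 (by simp [h])
  have hshift (ℓ : ℤ) (hℓ : ℓ ≠ 0) : ¬ d ∣ (φ ^ ℓ) d := by
    rintro ⟨u, hu⟩
    refine hd.not_isUnit (hnormal ℓ hℓ d dvd_rfl ⟨u, ?_⟩)
    rw [← hφ.algEquiv_zpow ℓ d, hu, map_mul]
  by_contra ha0
  exact RatFunc.div_pow_ne_mul_apply_sub hd.prime hφ hc hshift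
    (fun h => (Polynomial.degree_le_of_dvd h ha0).not_gt ha) (by omega) g hg

/-- **univariate summability criterion.** Let `F` be a field of characteristic
zero, `θ` either the shift `x ↦ x+1` or the `q`-shift `x ↦ q·x` on `F(x)`, `c ∈ F` nonzero,
`j ≥ 1`, `d ∈ F[x]` irreducible and normal w.r.t. `θ` (every common polynomial divisor of `d`
and `θ^ℓ(d)`, `ℓ ≠ 0`, is a unit), and `a ∈ F[x]` with `deg a < deg d`. Then `a/d^j` is
`(c·θ)`-summable in `F(x)` iff `a = 0`. -/
theorem stmt_8 {F : Type*} [Field F] [CharZero F]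
    (q : F) (hq0 : q ≠ 0) (hq : ∀ m : ℤ, m ≠ 0 → q ^ m ≠ 1)
    (θ : RatFunc F ≃ₐ[F] RatFunc F)
    (hθ : θ RatFunc.X = RatFunc.X + 1 ∨ θ RatFunc.X = algebraMap F (RatFunc F) q * RatFunc.X)
    (c : F) (hc : c ≠ 0) (j : ℕ) (hj : 1 ≤ j)
    (d : Polynomial F) (hd : Irreducible d)
    (hnormal : ∀ ℓ : ℤ, ℓ ≠ 0 → ∀ w : Polynomial F, w ∣ d →
      (∃ u : Polynomial F,
        (θ ^ ℓ) (algebraMap (Polynomial F) (RatFunc F) d) =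
          algebraMap (Polynomial F) (RatFunc F) w * algebraMap (Polynomial F) (RatFunc F) u) →
      IsUnit w)
    (a : Polynomial F) (ha : a.degree < d.degree) :
    (∃ g : RatFunc F,
        algebraMap (Polynomial F) (RatFunc F) a / algebraMap (Polynomial F) (RatFunc F) d ^ j =
          algebraMap F (RatFunc F) c * θ g - g) ↔ a = 0 :=
  stmt_8_general q hq0 θ hθ c hc j hj d hd hnormal a ha
end

section
/- Let d ∈ F[x] be a nonconstant polynomial and let {ω_i}_{i=1}^r and {η_i}_{i=1}^r (r ≥ 1) be two bases of the isotropy group G_d, with ω_i(d) = ε_i·d, η_i(d) = e_i·d for nonzero ε_i, e_i ∈ F, and ω_i = θ_x^{α_i}, η_i = θ_x^{β_i} with α_i, β_i ∈ ℤⁿ. Then for every f ∈ F(x), every c = (c₁,…,cₙ) with all c_i ∈ F nonzero, and every s ∈ ℤ: f is (ε₁^s c^{α₁}ω₁,…,ε_r^s c^{α_r}ω_r)-summable in F(x) if and only if f is (e₁^s c^{β₁}η₁,…,e_r^s c^{β_r}η_r)-summable in F(x). -/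
/-!
The pairs `(γ, λ)` with `θ_x^γ(d) = λ·d` form a subgroup `P` of `ℤⁿ × F^*` on which the
projection to `ℤⁿ` is injective, because `d ≠ 0`. Since the `αᵢ` and the `βᵢ` generate the same
subgroup of `ℤⁿ`, their lifts `(αᵢ, εᵢ)` and `(βᵢ, eᵢ)` therefore generate the same subgroup
of `P`. Now `(γ, λ) ↦ (x ↦ λ^s c^γ θ_x^γ(x))` is a representation `ρ` of `ℤⁿ × F^*` on `F(x)`,
and the space `∑ᵢ (ρ(aᵢ) - 1) F(x)` of summable elements depends only on the subgroup generated
by the `aᵢ`: from `ρ(gh)x - x = (ρ(g)y - y) + (ρ(h)x - x)` with `y = ρ(h)x`, every `ρ(g) - 1`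
with `g` in that subgroup has its range in this space.
-/

section Coboundaries

variable {R V ι : Type*} [Ring R] [AddCommGroup V] [Module R V] [Fintype ι]

def coboundaries (T : ι → Module.End R V) : Submodule R V :=
  LinearMap.range (∑ i, (T i - 1) ∘ₗ LinearMap.proj i)

theorem mem_coboundaries {T : ι → Module.End R V} {f : V} :
    f ∈ coboundaries T ↔ ∃ g : ι → V, f = ∑ i, (T i (g i) - g i) := by
  simp [coboundaries, eq_comm]

variable {M : Type*} [Group M]

theorem apply_sub_self_mem_coboundaries (ρ : M →* Module.End R V) {a : ι → M} {m : M}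
    (hm : m ∈ Subgroup.closure (Set.range a)) (x : V) : ρ m x - x ∈ coboundaries (ρ ∘ a) := by
  induction hm using Subgroup.closure_induction generalizing x with
  | mem _ h =>
    obtain ⟨i, rfl⟩ := h
    classical
    refine mem_coboundaries.mpr ⟨Pi.single i x, ?_⟩
    rw [Finset.sum_eq_single i (fun j _ hji => by simp [hji]) (by simp)]
    simp
  | one => simp
  | mul m m' _ _ hm hm' =>
    have h : ρ (m * m') x - x = (ρ m (ρ m' x) - ρ m' x) + (ρ m' x - x) := by simp
    exact h ▸ add_mem (hm _) (hm' x)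
  | inv m _ hm =>
    have h : ρ m⁻¹ x - x = -(ρ m (ρ m⁻¹ x) - ρ m⁻¹ x) := by
      rw [← Module.End.mul_apply, ← map_mul, mul_inv_cancel, map_one]
      simp
    exact h ▸ neg_mem (hm _)

theorem coboundaries_le_of_mem_closure (ρ : M →* Module.End R V) {a b : ι → M}
    (hb : ∀ i, b i ∈ Subgroup.closure (Set.range a)) :
    coboundaries (ρ ∘ b) ≤ coboundaries (ρ ∘ a) := by
  intro f hf
  obtain ⟨g, rfl⟩ := mem_coboundaries.mp hf
  exact sum_mem fun i _ => apply_sub_self_mem_coboundaries ρ (hb i) (g i)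

end Coboundaries

theorem Subgroup.mem_closure_range_of_injOn {M N ι : Type*} [Group M] [Group N] {f : M →* N}
    {P : Subgroup M} (hf : Set.InjOn f P) {a : ι → M} (ha : ∀ i, a i ∈ P) {y : M} (hy : y ∈ P)
    (hfy : f y ∈ Subgroup.closure (Set.range (f ∘ a))) : y ∈ Subgroup.closure (Set.range a) := by
  rw [Set.range_comp, ← MonoidHom.map_closure] at hfy
  obtain ⟨z, hz, hzy⟩ := hfy
  have hzP : z ∈ P := (Subgroup.closure_le P).mpr (Set.range_subset_iff.mpr ha) hz
  exact hf hzP hy hzy ▸ hz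

theorem Multiplicative.ofAdd_mem_closure_range {A ι : Type*} [AddCommGroup A] [Fintype ι]
    {α : ι → A} {γ : A} (h : ∃ t : ι → ℤ, γ = ∑ i, t i • α i) :
    ofAdd γ ∈ Subgroup.closure (Set.range (ofAdd ∘ α)) := by
  obtain ⟨t, rfl⟩ := h
  exact Subgroup.mem_closure_range_iff_of_fintype.mpr ⟨t, by simp [ofAdd_sum, ofAdd_zsmul]⟩

section Eigenpairs

variable {F L M : Type*} [Field F] [Field L] [Algebra F L] [Group M]

def eigenpairs (Θ : M →* (L ≃ₐ[F] L)) (p : L) : Subgroup (M × Fˣ) where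
  carrier := {x | Θ x.1 p = algebraMap F L x.2 * p}
  one_mem' := by simp
  mul_mem' := by
    rintro ⟨m, u⟩ ⟨m', u'⟩ (h : Θ m p = _) (h' : Θ m' p = _)
    show Θ (m * m') p = _
    rw [map_mul, AlgEquiv.mul_apply, h', map_mul, AlgEquiv.commutes, h]
    simp only [Prod.snd_mul, Units.val_mul, map_mul]
    ring
  inv_mem' := by
    rintro ⟨m, u⟩ (h : Θ m p = _)
    show Θ m⁻¹ p = _
    have hinv : Θ m⁻¹ (Θ m p) = p := by
      rw [← AlgEquiv.mul_apply, ← map_mul, inv_mul_cancel, map_one, AlgEquiv.one_apply]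
    rw [h, map_mul, AlgEquiv.commutes] at hinv
    simp only [Prod.snd_inv, Units.val_inv_eq_inv_val, map_inv₀]
    rw [eq_inv_mul_iff_mul_eq₀ (by simp)]
    exact hinv

theorem injOn_fst_eigenpairs (Θ : M →* (L ≃ₐ[F] L)) {p : L} (hp : p ≠ 0) :
    Set.InjOn (MonoidHom.fst M Fˣ) (eigenpairs Θ p) := by
  rintro ⟨m, u⟩ (h : Θ m p = _) ⟨m', u'⟩ (h' : Θ m' p = _) (hm : m = m')
  subst hm
  rw [h, mul_left_inj' hp] at h'
  exact congrArg (m, ·) (Units.ext ((algebraMap F L).injective h'))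

theorem coboundaries_le_of_eigenpairs {ι : Type*} [Fintype ι] (ρ : M × Fˣ →* Module.End F L)
    {Θ : M →* (L ≃ₐ[F] L)} {p : L} (hp : p ≠ 0) {a b : ι → M × Fˣ}
    (ha : ∀ i, a i ∈ eigenpairs Θ p) (hb : ∀ i, b i ∈ eigenpairs Θ p)
    (hab : ∀ i, (b i).1 ∈ Subgroup.closure (Set.range (Prod.fst ∘ a))) :
    coboundaries (ρ ∘ b) ≤ coboundaries (ρ ∘ a) :=
  coboundaries_le_of_mem_closure ρ fun i =>
    Subgroup.mem_closure_range_of_injOn (injOn_fst_eigenpairs Θ hp) ha (hb i) (hab i)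

def twist (k : M →* Fˣ) (Θ : M →* (L ≃ₐ[F] L)) : M →* Module.End F L where
  toFun m := (k m : F) • (Θ m).toLinearMap
  map_one' := by ext; simp
  map_mul' m m' := by ext; simp [Algebra.smul_def]

theorem twist_apply (k : M →* Fˣ) (Θ : M →* (L ≃ₐ[F] L)) (m : M) (x : L) :
    twist k Θ m x = algebraMap F L (k m) * Θ m x :=
  Algebra.smul_def _ _

end Eigenpairs

section ThetaPow

variable {F L ι : Type*} [CommSemiring F] [Semiring L] [Algebra F L] [Fintype ι]
  {θ : ι → (L ≃ₐ[F] L)}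

theorem thetaPowS_eq_noncommProd (hcomm : ∀ i j, Commute (θ i) (θ j)) (a : ι → ℤ) :
    thetaPowS θ a = Finset.univ.noncommProd (fun i => θ i ^ a i)
      (fun i _ j _ _ => (hcomm i j).zpow_zpow _ _) := by
  classical
  rw [thetaPowS, ← Finset.noncommProd_toFinset _ _ (fun i _ j _ _ => (hcomm i j).zpow_zpow _ _)
    (Finset.nodup_toList _)]
  exact Finset.noncommProd_congr (Finset.toList_toFinset _) (fun _ _ => rfl) _

noncomputable def thetaPowHom (hcomm : ∀ i j, Commute (θ i) (θ j)) :
    Multiplicative (ι → ℤ) →* (L ≃ₐ[F] L) where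
  toFun a := thetaPowS θ a.toAdd
  map_one' := by simp [thetaPowS]
  map_mul' a b := by
    simp only [thetaPowS_eq_noncommProd hcomm, toAdd_mul, Pi.add_apply, zpow_add]
    exact Finset.noncommProd_mul_distrib (fun i => θ i ^ a.toAdd i) (fun i => θ i ^ b.toAdd i)
      _ _ fun i _ j _ _ => (hcomm i j).zpow_zpow _ _

end ThetaPow

def monomialChar {F ι : Type*} [Field F] [Fintype ι] (c : ι → Fˣ) :
    Multiplicative (ι → ℤ) →* Fˣ where
  toFun γ := ∏ l, c l ^ γ.toAdd l
  map_one' := by simp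
  map_mul' γ γ' := by simp [zpow_add, Finset.prod_mul_distrib]

theorem MvRat.algEquiv_ext {F : Type*} [Field F] {n : ℕ} {φ ψ : MvRat F n ≃ₐ[F] MvRat F n}
    (h : ∀ l, φ (xv l) = ψ (xv l)) : φ = ψ := by
  have hpoly : (φ : MvRat F n →ₐ[F] MvRat F n).comp
        (IsScalarTower.toAlgHom F (MvPolynomial (Fin n) F) (MvRat F n)) =
      (ψ : MvRat F n →ₐ[F] MvRat F n).comp
        (IsScalarTower.toAlgHom F (MvPolynomial (Fin n) F) (MvRat F n)) :=
    MvPolynomial.algHom_ext h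
  exact AlgEquiv.ext <| RingHom.congr_fun <| IsFractionRing.ringHom_ext
    (A := MvPolynomial (Fin n) F) (f1 := (φ : MvRat F n →+* MvRat F n)) (f2 := ψ)
    fun x => AlgHom.congr_fun hpoly x

theorem AlgEquiv.apply_eq_self_of_mem_adjoin {F L : Type*} [CommSemiring F] [Semiring L]
    [Algebra F L] {φ : L ≃ₐ[F] L} {x y : L} (hx : φ x = x) (hy : y ∈ Algebra.adjoin F {x}) :
    φ y = y :=
  AlgHom.adjoin_le_equalizer (φ : L →ₐ[F] L) (AlgHom.id F L) (Set.eqOn_singleton.mpr hx) hy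

theorem commute_of_shift_or_qShift {F : Type*} [Field F] {n : ℕ} (q : F)
    {θ : Fin n → (MvRat F n ≃ₐ[F] MvRat F n)}
    (hθfix : ∀ i l : Fin n, i ≠ l → θ i (xv l) = xv l)
    (hθ : ∀ i : Fin n,
      θ i (xv i) = xv i + 1 ∨ θ i (xv i) = algebraMap F (MvRat F n) q * xv i)
    (i j : Fin n) : Commute (θ i) (θ j) := by
  have hadjoin : ∀ k l, θ k (xv l) ∈ Algebra.adjoin F {xv l} := by
    intro k l
    have hx := Algebra.self_mem_adjoin_singleton F (xv l : MvRat F n)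
    rcases eq_or_ne k l with rfl | hkl
    · rcases hθ k with h | h <;> rw [h]
      · exact add_mem hx (one_mem _)
      · exact mul_mem (Subalgebra.algebraMap_mem _ q) hx
    · rw [hθfix k l hkl]; exact hx
  rcases eq_or_ne i j with rfl | hij
  · exact Commute.refl _
  refine MvRat.algEquiv_ext fun l => ?_
  simp only [AlgEquiv.mul_apply]
  -- at most one of `θ i`, `θ j` moves `x_l`, and the other one fixes its image
  by_cases hil : i = l
  · have hjl : j ≠ l := hil ▸ hij.symm
    rw [hθfix j l hjl, (θ j).apply_eq_self_of_mem_adjoin (hθfix j l hjl) (hadjoin i l)]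
  · rw [hθfix i l hil, (θ i).apply_eq_self_of_mem_adjoin (hθfix i l hil) (hadjoin j l)]

theorem stmt_11_general {F : Type*} [Field F] {n : ℕ}
    (q : F)
    (θ : Fin n → (MvRat F n ≃ₐ[F] MvRat F n))
    (hθfix : ∀ i l : Fin n, i ≠ l → θ i (xv l) = xv l)
    (hθ : ∀ i : Fin n,
      θ i (xv i) = xv i + 1 ∨ θ i (xv i) = algebraMap F (MvRat F n) q * xv i)
    (d : MvPolynomial (Fin n) F) (hd : 0 < d.totalDegree)
    (r : ℕ)
    (α β : Fin r → (Fin n → ℤ)) (ε e : Fin r → F)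
    (hε : ∀ i, ε i ≠ 0) (he : ∀ i, e i ≠ 0)
    (hω : ∀ i : Fin r,
      thetaPowS θ (α i) (algebraMap (MvPolynomial (Fin n) F) (MvRat F n) d) =
        algebraMap F (MvRat F n) (ε i) * algebraMap (MvPolynomial (Fin n) F) (MvRat F n) d)
    (hη : ∀ i : Fin r,
      thetaPowS θ (β i) (algebraMap (MvPolynomial (Fin n) F) (MvRat F n) d) =
        algebraMap F (MvRat F n) (e i) * algebraMap (MvPolynomial (Fin n) F) (MvRat F n) d)
    -- `{ωᵢ}` is a basis of `G_d`: independent and spanning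
    (hωspan : ∀ γ : Fin n → ℤ,
      (∃ c0 : F, c0 ≠ 0 ∧
        thetaPowS θ γ (algebraMap (MvPolynomial (Fin n) F) (MvRat F n) d) =
          algebraMap F (MvRat F n) c0 *
            algebraMap (MvPolynomial (Fin n) F) (MvRat F n) d) →
      ∃ t : Fin r → ℤ, γ = ∑ i : Fin r, t i • α i)
    -- `{ηᵢ}` is a basis of `G_d`: independent and spanning
    (hηspan : ∀ γ : Fin n → ℤ,
      (∃ c0 : F, c0 ≠ 0 ∧
        thetaPowS θ γ (algebraMap (MvPolynomial (Fin n) F) (MvRat F n) d) =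
          algebraMap F (MvRat F n) c0 *
            algebraMap (MvPolynomial (Fin n) F) (MvRat F n) d) →
      ∃ t : Fin r → ℤ, γ = ∑ i : Fin r, t i • β i)
    (f : MvRat F n) (c : Fin n → F) (hc : ∀ i, c i ≠ 0) (s : ℤ) :
    (∃ g : Fin r → MvRat F n,
        f = ∑ i : Fin r,
          (algebraMap F (MvRat F n) (ε i ^ s * ∏ l : Fin n, c l ^ (α i l)) *
              thetaPowS θ (α i) (g i) - g i)) ↔
    (∃ g : Fin r → MvRat F n,
        f = ∑ i : Fin r,
          (algebraMap F (MvRat F n) (e i ^ s * ∏ l : Fin n, c l ^ (β i l)) *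
              thetaPowS θ (β i) (g i) - g i)) := by
  have hcomm := commute_of_shift_or_qShift q hθfix hθ
  let Θ := thetaPowHom hcomm
  let ρ := twist ((zpowGroupHom s).comp (MonoidHom.snd _ Fˣ) *
    (monomialChar fun l => Units.mk0 (c l) (hc l)).comp (MonoidHom.fst _ Fˣ))
    (Θ.comp (MonoidHom.fst _ Fˣ))
  set p := algebraMap (MvPolynomial (Fin n) F) (MvRat F n) d
  have hd0 : d ≠ 0 := by
    rintro rfl
    simp at hd
  have hp : p ≠ 0 := (map_ne_zero_iff _ (IsFractionRing.injective _ _)).mpr hd0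
  let lift (γ : Fin r → Fin n → ℤ) (κ : Fin r → F) (hκ : ∀ i, κ i ≠ 0) (i : Fin r) :
      Multiplicative (Fin n → ℤ) × Fˣ := (.ofAdd (γ i), Units.mk0 (κ i) (hκ i))
  have hmem : ∀ γ κ hκ, f ∈ coboundaries (ρ ∘ lift γ κ hκ) ↔ ∃ g : Fin r → MvRat F n,
      f = ∑ i, (algebraMap F (MvRat F n) (κ i ^ s * ∏ l, c l ^ (γ i l)) *
        thetaPowS θ (γ i) (g i) - g i) := by
    intro γ κ hκ
    simp [mem_coboundaries, ρ, twist_apply, lift, monomialChar, Θ, thetaPowHom]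
  rw [← hmem α ε hε, ← hmem β e he]
  have hα : ∀ i, lift α ε hε i ∈ eigenpairs Θ p := hω
  have hβ : ∀ i, lift β e he i ∈ eigenpairs Θ p := hη
  exact ⟨fun h => coboundaries_le_of_eigenpairs ρ hp hβ hα
      (fun i => Multiplicative.ofAdd_mem_closure_range (hηspan _ ⟨ε i, hε i, hω i⟩)) h,
    fun h => coboundaries_le_of_eigenpairs ρ hp hα hβ
      (fun i => Multiplicative.ofAdd_mem_closure_range (hωspan _ ⟨e i, he i, hη i⟩)) h⟩

set_option maxHeartbeats 1000000 in
/-- **Lemma: basis exchange.** Let `d ∈ F[x]` be nonconstant and let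
`{ωᵢ}ᵢ`, `{ηᵢ}ᵢ` (`r ≥ 1`) be two bases of the isotropy group `G_d`, with `ωᵢ(d) = εᵢ·d`,
`ηᵢ(d) = eᵢ·d`, `ωᵢ = θ_x^{αᵢ}`, `ηᵢ = θ_x^{βᵢ}`. Then for every `f ∈ F(x)`, every tuple
of nonzero constants `c` and every `s ∈ ℤ`: `f` is
`(ε₁^s c^{α₁}ω₁,…,ε_r^s c^{α_r}ω_r)`-summable iff `f` is
`(e₁^s c^{β₁}η₁,…,e_r^s c^{β_r}η_r)`-summable in `F(x)`. -/
theorem stmt_11 {F : Type*} [Field F] [CharZero F] {n : ℕ} [NeZero n]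
    (q : F) (hq0 : q ≠ 0) (hq : ∀ l : ℤ, l ≠ 0 → q ^ l ≠ 1)
    (θ : Fin n → (MvRat F n ≃ₐ[F] MvRat F n))
    (hθfix : ∀ i l : Fin n, i ≠ l → θ i (xv l) = xv l)
    (hθ : ∀ i : Fin n,
      θ i (xv i) = xv i + 1 ∨ θ i (xv i) = algebraMap F (MvRat F n) q * xv i)
    (d : MvPolynomial (Fin n) F) (hd : 0 < d.totalDegree)
    (r : ℕ) (hr : 1 ≤ r)
    (α β : Fin r → (Fin n → ℤ)) (ε e : Fin r → F)
    (hε : ∀ i, ε i ≠ 0) (he : ∀ i, e i ≠ 0)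
    (hω : ∀ i : Fin r,
      thetaPowS θ (α i) (algebraMap (MvPolynomial (Fin n) F) (MvRat F n) d) =
        algebraMap F (MvRat F n) (ε i) * algebraMap (MvPolynomial (Fin n) F) (MvRat F n) d)
    (hη : ∀ i : Fin r,
      thetaPowS θ (β i) (algebraMap (MvPolynomial (Fin n) F) (MvRat F n) d) =
        algebraMap F (MvRat F n) (e i) * algebraMap (MvPolynomial (Fin n) F) (MvRat F n) d)
    -- `{ωᵢ}` is a basis of `G_d`: independent and spanning
    (hωind : ∀ t : Fin r → ℤ, (∑ i : Fin r, t i • α i) = 0 → t = 0)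
    (hωspan : ∀ γ : Fin n → ℤ,
      (∃ c0 : F, c0 ≠ 0 ∧
        thetaPowS θ γ (algebraMap (MvPolynomial (Fin n) F) (MvRat F n) d) =
          algebraMap F (MvRat F n) c0 *
            algebraMap (MvPolynomial (Fin n) F) (MvRat F n) d) →
      ∃ t : Fin r → ℤ, γ = ∑ i : Fin r, t i • α i)
    -- `{ηᵢ}` is a basis of `G_d`: independent and spanning
    (hηind : ∀ t : Fin r → ℤ, (∑ i : Fin r, t i • β i) = 0 → t = 0)
    (hηspan : ∀ γ : Fin n → ℤ,
      (∃ c0 : F, c0 ≠ 0 ∧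
        thetaPowS θ γ (algebraMap (MvPolynomial (Fin n) F) (MvRat F n) d) =
          algebraMap F (MvRat F n) c0 *
            algebraMap (MvPolynomial (Fin n) F) (MvRat F n) d) →
      ∃ t : Fin r → ℤ, γ = ∑ i : Fin r, t i • β i)
    (f : MvRat F n) (c : Fin n → F) (hc : ∀ i, c i ≠ 0) (s : ℤ) :
    (∃ g : Fin r → MvRat F n,
        f = ∑ i : Fin r,
          (algebraMap F (MvRat F n) (ε i ^ s * ∏ l : Fin n, c l ^ (α i l)) *
              thetaPowS θ (α i) (g i) - g i)) ↔
    (∃ g : Fin r → MvRat F n,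
        f = ∑ i : Fin r,
          (algebraMap F (MvRat F n) (e i ^ s * ∏ l : Fin n, c l ^ (β i l)) *
              thetaPowS θ (β i) (g i) - g i)) :=
  stmt_11_general q θ hθfix hθ d hd r α β ε e hε he hω hη hωspan hηspan f c hc s
end

section
/- Let K = F(z) and let σ₁,…,σ_r (1 ≤ r ≤ k) be independent elements of G^σ, meaning that σ₁^{ℓ₁}···σ_r^{ℓ_r} = 1 with ℓ_i ∈ ℤ forces all ℓ_i = 0. Then there exists a K-automorphism φ of K(y) such that φ∘σ_i = σ_{y_i}∘φ for all 1 ≤ i ≤ r, and consequently, for every f ∈ K(y), f is (σ₁,…,σ_r)-summable in K(y) if and only if φ(f) is (σ_{y₁},…,σ_{y_r})-summable in K(y). -/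
/-!
The operator `σ_y^β` translates the variables, `y ↦ y + β`. Independence of the `σᵢ = σ_y^{βᵢ}`
says that `β₁,…,β_r` are `ℤ`-linearly independent, hence linearly independent over `K` (which has
characteristic zero). Extend them to a basis of `Kᵏ` and let `A` be the matrix with this basis as
columns. The linear change of variables `yⱼ ↦ ∑ₗ Aⱼₗ yₗ` turns the translation by `βᵢ` into the
translation by the `i`-th unit vector, i.e. it conjugates `σᵢ` into `σ_{yᵢ}`; conjugation carries
differences `σᵢ(g) - g` to differences `σ_{yᵢ}(φ g) - φ g`.
-/

namespace MvPolynomial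

variable {σ R : Type*} [Fintype σ] [CommSemiring R]

noncomputable def linearSubst (A : Matrix σ σ R) : MvPolynomial σ R →ₐ[R] MvPolynomial σ R :=
  aeval fun j => ∑ l, C (A j l) * X l

theorem linearSubst_X (A : Matrix σ σ R) (j : σ) :
    linearSubst A (X j) = ∑ l, C (A j l) * X l :=
  aeval_X _ j

theorem linearSubst_mul (A B : Matrix σ σ R) :
    linearSubst (A * B) = (linearSubst B).comp (linearSubst A) := by
  refine algHom_ext fun j => ?_
  simp only [AlgHom.comp_apply, linearSubst_X, map_sum, map_mul, algHom_C, algebraMap_eq,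
    Matrix.mul_apply, Finset.mul_sum, Finset.sum_mul]
  rw [Finset.sum_comm]
  simp only [mul_assoc]

variable [DecidableEq σ]

theorem linearSubst_one : linearSubst (1 : Matrix σ σ R) = AlgHom.id R _ :=
  algHom_ext fun j => by simp [linearSubst_X, Matrix.one_apply]

noncomputable def linearSubstEquiv (A : (Matrix σ σ R)ˣ) :
    MvPolynomial σ R ≃ₐ[R] MvPolynomial σ R :=
  AlgEquiv.ofAlgHom (linearSubst A) (linearSubst ↑A⁻¹)
    (by rw [← linearSubst_mul, Units.inv_mul, linearSubst_one])
    (by rw [← linearSubst_mul, Units.mul_inv, linearSubst_one])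

theorem linearSubstEquiv_X (A : (Matrix σ σ R)ˣ) (j : σ) :
    linearSubstEquiv A (X j) = ∑ l, C ((A : Matrix σ σ R) j l) * X l :=
  linearSubst_X _ j

end MvPolynomial

section RationalFunctions

variable {K : Type*} [Field K] {k : ℕ}

theorem MvRat.algEquiv_ext_s12 {g h : MvRat K k ≃ₐ[K] MvRat K k}
    (H : ∀ j, g (xv j) = h (xv j)) : g = h := by
  have hpoly : (g : MvRat K k →ₐ[K] MvRat K k).comp (IsScalarTower.toAlgHom K _ _) =
      (h : MvRat K k →ₐ[K] MvRat K k).comp (IsScalarTower.toAlgHom K _ _) :=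
    MvPolynomial.algHom_ext fun j => H j
  refine AlgEquiv.ext fun x => ?_
  obtain ⟨p, q, -, rfl⟩ := IsFractionRing.div_surjective (A := MvPolynomial (Fin k) K) x
  simp only [map_div₀]
  exact congrArg₂ (· / ·) (DFunLike.congr_fun hpoly p) (DFunLike.congr_fun hpoly q)

noncomputable def MvRat.linearChangeOfVars (A : (Matrix (Fin k) (Fin k) K)ˣ) :
    MvRat K k ≃ₐ[K] MvRat K k :=
  IsFractionRing.algEquivOfAlgEquiv (MvPolynomial.linearSubstEquiv A)

theorem MvRat.linearChangeOfVars_xv (A : (Matrix (Fin k) (Fin k) K)ˣ) (j : Fin k) :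
    linearChangeOfVars A (xv j) =
      ∑ l, algebraMap K _ ((A : Matrix (Fin k) (Fin k) K) j l) * xv l := by
  rw [linearChangeOfVars, xv, IsFractionRing.algEquivOfAlgEquiv_algebraMap,
    MvPolynomial.linearSubstEquiv_X, map_sum]
  simp only [map_mul, xv, ← MvPolynomial.algebraMap_eq, ← IsScalarTower.algebraMap_apply]

end RationalFunctions

section BasisExtension

open Module

theorem Module.Basis.sumExtend_inl {K V ι : Type*} [Field K] [AddCommGroup V] [Module K V]
    {v : ι → V} (hv : LinearIndependent K v) (i : ι) : Basis.sumExtend hv (Sum.inl i) = v i := by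
  simp only [Basis.sumExtend, Basis.reindex_apply, Basis.coe_extend]
  rfl

theorem exists_basis_castLE_eq {K V : Type*} [Field K] [AddCommGroup V] [Module K V]
    [FiniteDimensional K V] {r k : ℕ} (hrk : r ≤ k) (hV : finrank K V = k) {v : Fin r → V}
    (hv : LinearIndependent K v) : ∃ b : Basis (Fin k) K V, ∀ i, b (Fin.castLE hrk i) = v i := by
  let b₀ := Basis.sumExtend hv
  have := Module.Finite.finite_basis b₀
  have : Finite (Basis.sumExtendIndex hv) := Finite.of_injective _ (Sum.inr_injective (α := Fin r))
  have := Fintype.ofFinite (Basis.sumExtendIndex hv)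
  have hcard : r + Fintype.card (Basis.sumExtendIndex hv) = k := by
    rw [← hV, finrank_eq_card_basis b₀, Fintype.card_sum, Fintype.card_fin]
  let e : Fin r ⊕ Basis.sumExtendIndex hv ≃ Fin k :=
    ((Equiv.refl _).sumCongr (Fintype.equivFin _)).trans (finSumFinEquiv.trans (finCongr hcard))
  refine ⟨b₀.reindex e, fun i => ?_⟩
  have he : e.symm (Fin.castLE hrk i) = Sum.inl i := by
    rw [Equiv.symm_apply_eq]
    ext
    simp [e]
  rw [Basis.reindex_apply, he, Basis.sumExtend_inl]

end BasisExtension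

section Shifts

variable {R L : Type*} [CommSemiring R] [CommRing L] [Algebra R L] {x : L}

theorem AlgEquiv.zpow_apply_of_apply_eq_add {g : L ≃ₐ[R] L} {d : ℤ} (hg : g x = x + d) (n : ℤ) :
    (g ^ n) x = x + (n * d : ℤ) := by
  have hinv : g⁻¹ x = x - d := by
    apply g.injective
    rw [← AlgEquiv.mul_apply, mul_inv_cancel, AlgEquiv.one_apply, map_sub, hg, map_intCast]
    ring
  induction n using Int.induction_on with
  | zero => simp
  | succ n ih =>
    rw [zpow_add_one, AlgEquiv.mul_apply, hg, map_add, map_intCast, ih]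
    push_cast; ring
  | pred n ih =>
    rw [zpow_sub_one, AlgEquiv.mul_apply, hinv, map_sub, map_intCast, ih]
    push_cast; ring

theorem AlgEquiv.list_prod_map_apply_of_apply_eq_add {ι : Type*} {θ : ι → L ≃ₐ[R] L} {c : ι → ℤ}
    (l : List ι) (h : ∀ i ∈ l, θ i x = x + c i) : (l.map θ).prod x = x + (l.map c).sum := by
  induction l with
  | nil => simp
  | cons a t ih =>
    rw [List.map_cons, List.prod_cons, AlgEquiv.mul_apply,
      ih fun i hi => h i (List.mem_cons_of_mem a hi), map_add, map_intCast,
      h a List.mem_cons_self, List.map_cons, List.sum_cons]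
    push_cast; ring

theorem thetaPowS_apply_of_apply_eq_add {ι : Type*} [Fintype ι] {θ : ι → L ≃ₐ[R] L} {c : ι → ℤ}
    (h : ∀ i, θ i x = x + c i) (α : ι → ℤ) :
    thetaPowS θ α x = x + (∑ i, α i * c i : ℤ) := by
  rw [thetaPowS, AlgEquiv.list_prod_map_apply_of_apply_eq_add (c := fun i => α i * c i) _
    fun i _ => AlgEquiv.zpow_apply_of_apply_eq_add (h i) (α i), Finset.sum_map_toList]

end Shifts

section ShiftOperators

variable {K : Type*} [Field K] {k : ℕ} {σ : Fin k → MvRat K k ≃ₐ[K] MvRat K k}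

theorem shift_apply_xv (hσ : ∀ i, σ i (xv i) = xv i + 1)
    (hσfix : ∀ i l, i ≠ l → σ i (xv l) = xv l) (i l : Fin k) :
    σ i (xv l) = xv l + ((if i = l then 1 else 0 : ℤ) : MvRat K k) := by
  by_cases h : i = l
  · subst h; simpa using hσ i
  · simp [hσfix i l h, h]

variable (hσ : ∀ i, σ i (xv i) = xv i + 1) (hσfix : ∀ i l, i ≠ l → σ i (xv l) = xv l)
include hσ hσfix

theorem thetaPowS_shift_apply_xv (α : Fin k → ℤ) (j : Fin k) :
    thetaPowS σ α (xv j) = xv j + (α j : MvRat K k) := by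
  rw [thetaPowS_apply_of_apply_eq_add (fun i => shift_apply_xv hσ hσfix i j)]
  simp

theorem linearIndependent_of_thetaPowS_eq_one {r : ℕ} {β : Fin r → Fin k → ℤ}
    (hindep : ∀ ℓ : Fin r → ℤ, thetaPowS (fun i => thetaPowS σ (β i)) ℓ = 1 → ℓ = 0) :
    LinearIndependent ℤ β := by
  refine Fintype.linearIndependent_iff.mpr fun ℓ hℓ => congrFun (hindep ℓ ?_)
  refine MvRat.algEquiv_ext_s12 fun j => ?_
  have hℓj : ∑ i, ℓ i * β i j = 0 := by simpa using congrFun hℓ j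
  rw [thetaPowS_apply_of_apply_eq_add (fun i => thetaPowS_shift_apply_xv hσ hσfix (β i) j), hℓj]
  simp

theorem linearChangeOfVars_thetaPowS_shift (A : (Matrix (Fin k) (Fin k) K)ˣ) {α : Fin k → ℤ}
    {l : Fin k} (hA : ∀ j, (A : Matrix (Fin k) (Fin k) K) j l = α j) (x : MvRat K k) :
    MvRat.linearChangeOfVars A (thetaPowS σ α x) = σ l (MvRat.linearChangeOfVars A x) := by
  suffices (thetaPowS σ α).trans (MvRat.linearChangeOfVars A) =
      (MvRat.linearChangeOfVars A).trans (σ l) from DFunLike.congr_fun this x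
  refine MvRat.algEquiv_ext_s12 fun j => ?_
  simp only [AlgEquiv.trans_apply, thetaPowS_shift_apply_xv hσ hσfix, map_add, map_intCast,
    MvRat.linearChangeOfVars_xv, map_sum, map_mul, AlgEquiv.commutes,
    shift_apply_xv hσ hσfix, mul_add, Finset.sum_add_distrib]
  simp [hA]

end ShiftOperators

theorem exists_eq_sum_sub_iff_of_conj {R L L' ι : Type*} [CommSemiring R] [Ring L] [Ring L']
    [Algebra R L] [Algebra R L'] [Fintype ι] {φ : L ≃ₐ[R] L'} {θ : ι → L ≃ₐ[R] L}
    {θ' : ι → L' ≃ₐ[R] L'} (h : ∀ i x, φ (θ i x) = θ' i (φ x)) (f : L) :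
    (∃ g : ι → L, f = ∑ i, (θ i (g i) - g i)) ↔ ∃ g : ι → L', φ f = ∑ i, (θ' i (g i) - g i) := by
  constructor
  · rintro ⟨g, rfl⟩
    exact ⟨fun i => φ (g i), by simp only [map_sum, map_sub, h]⟩
  · rintro ⟨g, hg⟩
    refine ⟨fun i => φ.symm (g i), φ.injective ?_⟩
    simp only [hg, map_sum, map_sub, h, AlgEquiv.apply_symm_apply]

theorem stmt_12_general {F : Type*} [Field F] [CharZero F] {k m : ℕ}
    (σ : Fin k → (MvRat (MvRat F m) k ≃ₐ[MvRat F m] MvRat (MvRat F m) k))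
    (hσ : ∀ i : Fin k, σ i (xv i) = xv i + 1)
    (hσfix : ∀ i l : Fin k, i ≠ l → σ i (xv l) = xv l)
    (r : ℕ) (hrk : r ≤ k)
    (β : Fin r → (Fin k → ℤ))
    -- independence of `σ₁,…,σ_r`: `σ₁^{ℓ₁}⋯σ_r^{ℓ_r} = 1` forces `ℓ = 0`
    (hindep : ∀ ℓ : Fin r → ℤ,
      thetaPowS (fun i : Fin r => thetaPowS σ (β i)) ℓ = 1 → ℓ = 0) :
    ∃ φ : MvRat (MvRat F m) k ≃ₐ[MvRat F m] MvRat (MvRat F m) k,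
      (∀ (i : Fin r) (x : MvRat (MvRat F m) k),
        φ (thetaPowS σ (β i) x) = σ (Fin.castLE hrk i) (φ x)) ∧
      ∀ f : MvRat (MvRat F m) k,
        ((∃ g : Fin r → MvRat (MvRat F m) k,
            f = ∑ i : Fin r, (thetaPowS σ (β i) (g i) - g i)) ↔
          (∃ g : Fin r → MvRat (MvRat F m) k,
            φ f = ∑ i : Fin r, (σ (Fin.castLE hrk i) (g i) - g i))) := by
  set K := MvRat F m
  have hβ : LinearIndependent K fun i => algebraMap ℤ K ∘ β i :=
    linearIndependent_algebraMap_comp_iff.mpr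
      (linearIndependent_of_thetaPowS_eq_one hσ hσfix hindep)
  obtain ⟨b, hb⟩ := exists_basis_castLE_eq hrk (Module.finrank_fin_fun K) hβ
  let := (Pi.basisFun K (Fin k)).invertibleToMatrix b
  set A := unitOfInvertible ((Pi.basisFun K (Fin k)).toMatrix b)
  have hφ : ∀ i x, MvRat.linearChangeOfVars A (thetaPowS σ (β i) x) =
      σ (Fin.castLE hrk i) (MvRat.linearChangeOfVars A x) := fun i =>
    linearChangeOfVars_thetaPowS_shift hσ hσfix A fun j => by
      simp [A, Module.Basis.toMatrix_apply, hb]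
  exact ⟨_, hφ, exists_eq_sum_sub_iff_of_conj hφ⟩

set_option maxHeartbeats 2000000 in
set_option synthInstance.maxHeartbeats 1000000 in
/-- **Proposition: difference transformation, shift case.** Let `K = F(z)`
and let `σ₁,…,σ_r` (`1 ≤ r ≤ k`), `σᵢ = σ_y^{βᵢ}`, be independent elements of
`G^σ = ⟨σ_{y₁},…,σ_{y_k}⟩`. Then there is a `K`-automorphism `φ` of `K(y)` with
`φ∘σᵢ = σ_{yᵢ}∘φ` for all `i`, and consequently `f ∈ K(y)` is `(σ₁,…,σ_r)`-summable in
`K(y)` iff `φ(f)` is `(σ_{y₁},…,σ_{y_r})`-summable in `K(y)`. -/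
theorem stmt_12 {F : Type*} [Field F] [CharZero F] {k m : ℕ}
    (σ : Fin k → (MvRat (MvRat F m) k ≃ₐ[MvRat F m] MvRat (MvRat F m) k))
    (hσ : ∀ i : Fin k, σ i (xv i) = xv i + 1)
    (hσfix : ∀ i l : Fin k, i ≠ l → σ i (xv l) = xv l)
    (r : ℕ) (hr1 : 1 ≤ r) (hrk : r ≤ k)
    (β : Fin r → (Fin k → ℤ))
    -- independence of `σ₁,…,σ_r`: `σ₁^{ℓ₁}⋯σ_r^{ℓ_r} = 1` forces `ℓ = 0`
    (hindep : ∀ ℓ : Fin r → ℤ,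
      thetaPowS (fun i : Fin r => thetaPowS σ (β i)) ℓ = 1 → ℓ = 0) :
    ∃ φ : MvRat (MvRat F m) k ≃ₐ[MvRat F m] MvRat (MvRat F m) k,
      (∀ (i : Fin r) (x : MvRat (MvRat F m) k),
        φ (thetaPowS σ (β i) x) = σ (Fin.castLE hrk i) (φ x)) ∧
      ∀ f : MvRat (MvRat F m) k,
        ((∃ g : Fin r → MvRat (MvRat F m) k,
            f = ∑ i : Fin r, (thetaPowS σ (β i) (g i) - g i)) ↔
          (∃ g : Fin r → MvRat (MvRat F m) k,
            φ f = ∑ i : Fin r, (σ (Fin.castLE hrk i) (g i) - g i))) :=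
  stmt_12_general σ hσ hσfix r hrk β hindep
end
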